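/- arXiv:2603.28078 — 9 statements merged into one kernel-verified Lean document; each statement's English description precedes it below -/
import Mathlib

section
/- Let α<β and let g:[α,β]→ℝ be continuous and non-decreasing. For γ ∈ [α,β] set F(γ) = ∫_α^γ (g(x)−g(α))² dx + ∫_γ^β (g(β)−g(x))² dx. Then a point γ* ∈ [α,β] minimizes F over [α,β] if and only if g(γ*) = (g(α)+g(β))/2. -/
/-!
Since `(g x - g α)² - (g β - g x)² = (g β - g α) (2 g x - g α - g β)`, the fidelity is, up to an
additive constant, `g β - g α` times a primitive of the non-decreasing continuous function
`h = 2 g - g α - g β`, which is `≤ 0` at `α` and `≥ 0` at `β`. Such a primitive is minimal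
exactly where `h` vanishes: it decreases while `h ≤ 0` and increases while `h ≥ 0`.
The degenerate case `g α = g β` forces `g` to be constant, where everything holds trivially.
-/

open intervalIntegral Set

noncomputable def fidelity (g : ℝ → ℝ) (α β γ : ℝ) : ℝ :=
  (∫ x in α..γ, (g x - g α) ^ 2) + ∫ x in γ..β, (g β - g x) ^ 2

theorem fidelity_eq_add_mul_integral {g : ℝ → ℝ} {α β γ : ℝ} (hg : ContinuousOn g (Icc α β))
    (hγ : γ ∈ Icc α β) :
    fidelity g α β γ =
      fidelity g α β α + (g β - g α) * ∫ x in α..γ, (2 * g x - g α - g β) := by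
  have hα : α ∈ Icc α β := left_mem_Icc.2 (hγ.1.trans hγ.2)
  have hA : IntervalIntegrable (fun x => (g x - g α) ^ 2) MeasureTheory.volume α γ :=
    (((hg.sub continuousOn_const).pow 2).mono (uIcc_subset_Icc hα hγ)).intervalIntegrable
  have hB : ∀ t ∈ Icc α β,
      IntervalIntegrable (fun x => (g β - g x) ^ 2) MeasureTheory.volume α t := fun t ht =>
    (((continuousOn_const.sub hg).pow 2).mono (uIcc_subset_Icc hα ht)).intervalIntegrable
  have hdiff : (g β - g α) * ∫ x in α..γ, (2 * g x - g α - g β) =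
      (∫ x in α..γ, (g x - g α) ^ 2) - ∫ x in α..γ, (g β - g x) ^ 2 := by
    rw [← integral_const_mul, ← integral_sub hA (hB γ hγ)]
    exact integral_congr fun x _ => by ring
  have hsplit := integral_interval_sub_left (hB β (right_mem_Icc.2 (hγ.1.trans hγ.2))) (hB γ hγ)
  simp only [fidelity, integral_same, zero_add]
  linarith

theorem mul_le_integral_of_monotoneOn {h : ℝ → ℝ} {s t : ℝ} (hst : s ≤ t)
    (hm : MonotoneOn h (Icc s t)) : (t - s) * h s ≤ ∫ x in s..t, h x := by
  have hi : IntervalIntegrable h MeasureTheory.volume s t :=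
    MonotoneOn.intervalIntegrable (by rwa [uIcc_of_le hst])
  have hle := integral_mono_on hst intervalIntegrable_const hi
    fun x hx => hm (left_mem_Icc.2 hst) hx hx.1
  simpa only [integral_const, smul_eq_mul] using hle

theorem integral_le_mul_of_monotoneOn {h : ℝ → ℝ} {s t : ℝ} (hst : s ≤ t)
    (hm : MonotoneOn h (Icc s t)) : ∫ x in s..t, h x ≤ (t - s) * h t := by
  have hi : IntervalIntegrable h MeasureTheory.volume s t :=
    MonotoneOn.intervalIntegrable (by rwa [uIcc_of_le hst])
  have hle := integral_mono_on hst hi intervalIntegrable_const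
    fun x hx => hm hx (right_mem_Icc.2 hst) hx.2
  simpa only [integral_const, smul_eq_mul] using hle

theorem isMinOn_integral_iff {h : ℝ → ℝ} {a b s : ℝ} (hc : ContinuousOn h (Icc a b))
    (hm : MonotoneOn h (Icc a b)) (ha : h a ≤ 0) (hb : 0 ≤ h b) (hs : s ∈ Icc a b) :
    IsMinOn (fun t => ∫ x in a..t, h x) (Icc a b) s ↔ h s = 0 := by
  have hmono : ∀ {u v}, u ∈ Icc a b → v ∈ Icc a b → MonotoneOn h (Icc u v) := fun hu hv =>
    hm.mono (Icc_subset_Icc hu.1 hv.2)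
  have ha' : a ∈ Icc a b := left_mem_Icc.2 (hs.1.trans hs.2)
  have hint : ∀ t ∈ Icc a b, IntervalIntegrable h MeasureTheory.volume a t := fun t ht =>
    MonotoneOn.intervalIntegrable (hm.mono (uIcc_subset_Icc ha' ht))
  have hdiff : ∀ t ∈ Icc a b, (∫ x in a..t, h x) - ∫ x in a..s, h x = ∫ x in s..t, h x :=
    fun t ht => integral_interval_sub_left (hint t ht) (hint s hs)
  rw [isMinOn_iff]
  constructor
  · intro hmin
    have h_right : ∀ t ∈ Ioc s b, 0 ≤ h t := by
      intro t ht
      have htI : t ∈ Icc a b := ⟨hs.1.trans ht.1.le, ht.2⟩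
      have hpos : 0 ≤ ∫ x in s..t, h x := by rw [← hdiff t htI]; linarith [hmin t htI]
      have := integral_le_mul_of_monotoneOn ht.1.le (hmono hs htI)
      exact nonneg_of_mul_nonneg_right (hpos.trans this) (sub_pos.2 ht.1)
    have h_left : ∀ t ∈ Ico a s, h t ≤ 0 := by
      intro t ht
      have htI : t ∈ Icc a b := ⟨ht.1, ht.2.le.trans hs.2⟩
      have hneg : ∫ x in t..s, h x ≤ 0 := by
        rw [integral_symm, neg_nonpos, ← hdiff t htI]; linarith [hmin t htI]
      have := mul_le_integral_of_monotoneOn ht.2.le (hmono htI hs)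
      exact nonpos_of_mul_nonpos_right (this.trans hneg) (sub_pos.2 ht.2)
    apply le_antisymm
    · rcases hs.1.eq_or_lt with rfl | has
      · exact ha
      · have hcl : s ∈ closure (Ico a s) := by
          rw [closure_Ico has.ne]; exact right_mem_Icc.2 has.le
        exact ((hc s hs).mono (Ico_subset_Icc_self.trans (Icc_subset_Icc_right hs.2))).closure_le
          hcl continuousWithinAt_const h_left
    · rcases hs.2.eq_or_lt with rfl | hsb
      · exact hb
      · have hcl : s ∈ closure (Ioc s b) := by
          rw [closure_Ioc hsb.ne]; exact left_mem_Icc.2 hsb.le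
        exact continuousWithinAt_const.closure_le hcl
          ((hc s hs).mono (Ioc_subset_Icc_self.trans (Icc_subset_Icc_left hs.1))) h_right
  · intro hzero t ht
    rw [← sub_nonneg, hdiff t ht]
    rcases le_total s t with hst | hts
    · simpa [hzero] using mul_le_integral_of_monotoneOn hst (hmono hs ht)
    · rw [integral_symm, neg_nonneg]
      simpa [hzero] using integral_le_mul_of_monotoneOn hts (hmono ht hs)

theorem fidelity_min_iff_midpoint_general (α β : ℝ) (g : ℝ → ℝ)
    (hgc : ContinuousOn g (Set.Icc α β)) (hgm : MonotoneOn g (Set.Icc α β))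
    (γs : ℝ) (hγs : γs ∈ Set.Icc α β) :
    (∀ γ ∈ Set.Icc α β,
        (∫ x in α..γs, (g x - g α) ^ 2) + (∫ x in γs..β, (g β - g x) ^ 2) ≤
          (∫ x in α..γ, (g x - g α) ^ 2) + (∫ x in γ..β, (g β - g x) ^ 2)) ↔
      g γs = (g α + g β) / 2 := by
  change IsMinOn (fidelity g α β) (Icc α β) γs ↔ _
  have hα : α ∈ Icc α β := left_mem_Icc.2 (hγs.1.trans hγs.2)
  have hβ : β ∈ Icc α β := right_mem_Icc.2 (hγs.1.trans hγs.2)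
  have hF := fun γ (hγ : γ ∈ Icc α β) => fidelity_eq_add_mul_integral hgc hγ
  rcases (sub_nonneg.2 (hgm hα hβ (hγs.1.trans hγs.2))).eq_or_lt with hc | hc
  · have := hgm hα hγs hγs.1
    have := hgm hγs hβ hγs.2
    refine iff_of_true (isMinOn_iff.2 fun γ hγ => ?_) (by linarith)
    rw [hF γ hγ, hF γs hγs, ← hc, zero_mul, zero_mul]
  · calc IsMinOn (fidelity g α β) (Icc α β) γs
          ↔ IsMinOn (fun t => ∫ x in α..t, (2 * g x - g α - g β)) (Icc α β) γs := by
            simp only [isMinOn_iff]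
            refine forall₂_congr fun γ hγ => ?_
            rw [hF γ hγ, hF γs hγs, add_le_add_iff_left, mul_le_mul_iff_right₀ hc]
      _ ↔ 2 * g γs - g α - g β = 0 :=
          isMinOn_integral_iff (by fun_prop) (fun x hx y hy hxy => by linarith [hgm hx hy hxy])
            (by linarith) (by linarith) hγs
      _ ↔ g γs = (g α + g β) / 2 := by constructor <;> intro <;> linarith

/-- For continuous non-decreasing `g` on `[α,β]`, the fidelity
`F(γ) = ∫_α^γ (g(x)-g(α))² dx + ∫_γ^β (g(β)-g(x))² dx` is minimized over `[α,β]`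
at `γ*` if and only if `g(γ*) = (g(α)+g(β))/2`. -/
theorem fidelity_min_iff_midpoint (α β : ℝ) (hab : α < β) (g : ℝ → ℝ)
    (hgc : ContinuousOn g (Set.Icc α β)) (hgm : MonotoneOn g (Set.Icc α β))
    (γs : ℝ) (hγs : γs ∈ Set.Icc α β) :
    (∀ γ ∈ Set.Icc α β,
        (∫ x in α..γs, (g x - g α) ^ 2) + (∫ x in γs..β, (g β - g x) ^ 2) ≤
          (∫ x in α..γ, (g x - g α) ^ 2) + (∫ x in γ..β, (g β - g x) ^ 2)) ↔
      g γs = (g α + g β) / 2 :=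
  fidelity_min_iff_midpoint_general α β g hgc hgm γs hγs
end

section
/- Let α<β, let g:[α,β]→ℝ be continuous and non-decreasing, set ρ := g(β)−g(α), let γ ∈ [α,β] satisfy g(γ) = (g(α)+g(β))/2, and define U₀ = g(α) on [α,γ) and U₀ = g(β) on [γ,β]. Let δ ∈ (0,1) and, for any α ≤ x₁ ≤ x₂ ≤ β, define v = g(α) on [α,x₁), v = g(α)+δρ on [x₁,x₂), and v = g(β) on [x₂,β]. Then ∫_α^β (U₀−g)² dx − ∫_α^β (v−g)² dx ≤ δ(1−δ) ρ² (β−α). -/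
/-!
Pointwise, `U₀ x` is the level of `{g α, g β}` nearest to `g x`, because `g x ≤ g γ` exactly
to the left of `γ`. Replacing it by any of the three levels of `v` raises the squared error by at
most `δ(1-δ)ρ²`, the worst case being the middle level when `g x` sits at the midpoint, so the
bound follows by integrating over `[α, β]`.
-/

open intervalIntegral MeasureTheory Set

lemma IntervalIntegrable.ite_lt {E : Type*} [NormedAddCommGroup E] {μ : Measure ℝ}
    {f₁ f₂ : ℝ → E} {a b : ℝ} (c : ℝ) (h₁ : IntervalIntegrable f₁ μ a b)
    (h₂ : IntervalIntegrable f₂ μ a b) :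
    IntervalIntegrable (fun x => if x < c then f₁ x else f₂ x) μ a b := by
  rw [intervalIntegrable_iff] at *
  exact Integrable.piecewise (s := Iio c) measurableSet_Iio h₁.integrableOn h₂.integrableOn

lemma sub_sq_sub_sub_sq_le {a b δ t u w : ℝ} (hab : a ≤ b) (hδ0 : 0 ≤ δ) (hδ1 : δ ≤ 1)
    (hu : u = a ∧ t ≤ (a + b) / 2 ∨ u = b ∧ (a + b) / 2 ≤ t)
    (hw : w = a ∨ w = a + δ * (b - a) ∨ w = b) :
    (u - t) ^ 2 - (w - t) ^ 2 ≤ δ * (1 - δ) * (b - a) ^ 2 := by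
  have hρ : 0 ≤ b - a := sub_nonneg.2 hab
  have hK : 0 ≤ δ * (1 - δ) * (b - a) ^ 2 := by
    have : 0 ≤ 1 - δ := sub_nonneg.2 hδ1
    positivity
  rcases hu with ⟨rfl, ht⟩ | ⟨rfl, ht⟩ <;> rcases hw with rfl | rfl | rfl
  all_goals nlinarith [mul_nonneg hδ0 hρ, mul_nonneg (sub_nonneg.2 hδ1) hρ]

theorem fidelity_increase_bound_general (α β : ℝ) (hab : α < β) (g : ℝ → ℝ)
    (hgc : ContinuousOn g (Set.Icc α β)) (hgm : MonotoneOn g (Set.Icc α β))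
    (γ : ℝ) (hγ : γ ∈ Set.Icc α β) (hγmid : g γ = (g α + g β) / 2)
    (δ : ℝ) (hδ : δ ∈ Set.Ioo (0 : ℝ) 1)
    (x₁ x₂ : ℝ) :
    (∫ x in α..β, ((if x < γ then g α else g β) - g x) ^ 2) -
        (∫ x in α..β,
          ((if x < x₁ then g α else if x < x₂ then g α + δ * (g β - g α) else g β) - g x) ^ 2) ≤
      δ * (1 - δ) * (g β - g α) ^ 2 * (β - α) := by
  have hαβ : g α ≤ g β := hgm (left_mem_Icc.2 hab.le) (right_mem_Icc.2 hab.le) hab.le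
  have hsq (p : ℝ) : IntervalIntegrable (fun x => (p - g x) ^ 2) volume α β :=
    ((continuousOn_const.sub (hgc.mono (uIcc_of_le hab.le).subset)).pow 2).intervalIntegrable
  have hU := (hsq (g α)).ite_lt γ (hsq (g β))
  have hV := (hsq (g α)).ite_lt x₁ ((hsq (g α + δ * (g β - g α))).ite_lt x₂ (hsq (g β)))
  simp only [ite_sub, ite_pow]
  rw [← integral_sub hU hV]
  calc _ ≤ ∫ _ in α..β, δ * (1 - δ) * (g β - g α) ^ 2 :=
        integral_mono_on hab.le (hU.sub hV) intervalIntegrable_const fun x hx => ?_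
    _ = _ := by rw [intervalIntegral.integral_const, smul_eq_mul, mul_comm]
  simp only [← ite_pow, ← ite_sub]
  refine sub_sq_sub_sub_sq_le hαβ hδ.1.le hδ.2.le ?_ (by split_ifs <;> simp)
  rw [← hγmid]
  by_cases hxγ : x < γ
  · exact .inl ⟨if_pos hxγ, hgm hx hγ hxγ.le⟩
  · exact .inr ⟨if_neg hxγ, hgm hγ hx (not_lt.1 hxγ)⟩

/-- Fidelity comparison (Lemma on the increase of fidelity): for continuous
non-decreasing `g` on `[α,β]`, `ρ = g(β) - g(α)`, `U₀` the one-jump step function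
jumping at a point `γ` with `g(γ) = (g(α)+g(β))/2`, and `v` any non-decreasing step
function with the three values `g(α)`, `g(α)+δρ`, `g(β)`,
`∫ (U₀ - g)² - ∫ (v - g)² ≤ δ(1-δ)ρ²(β-α)`. -/
theorem fidelity_increase_bound (α β : ℝ) (hab : α < β) (g : ℝ → ℝ)
    (hgc : ContinuousOn g (Set.Icc α β)) (hgm : MonotoneOn g (Set.Icc α β))
    (γ : ℝ) (hγ : γ ∈ Set.Icc α β) (hγmid : g γ = (g α + g β) / 2)
    (δ : ℝ) (hδ : δ ∈ Set.Ioo (0 : ℝ) 1)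
    (x₁ x₂ : ℝ) (h1 : α ≤ x₁) (h12 : x₁ ≤ x₂) (h2 : x₂ ≤ β) :
    (∫ x in α..β, ((if x < γ then g α else g β) - g x) ^ 2) -
        (∫ x in α..β,
          ((if x < x₁ then g α else if x < x₂ then g α + δ * (g β - g α) else g β) - g x) ^ 2) ≤
      δ * (1 - δ) * (g β - g α) ^ 2 * (β - α) :=
  fidelity_increase_bound_general α β hab g hgc hgm γ hγ hγmid δ hδ x₁ x₂
end

section
/- Let K:[0,∞)→[0,∞) be non-decreasing with K(0)=0, let M>0 and C_M>0 satisfy K(ρ₁)+K(ρ₂) ≥ K(ρ₁+ρ₂)+C_M ρ₁ρ₂ for all ρ₁,ρ₂ ≥ 0 with ρ₁+ρ₂ ≤ M. Let α<β, let g:[α,β]→ℝ be continuous and non-decreasing with ρ := g(β)−g(α) ≤ M, let λ>0 and assume C_* := C_M − (β−α)λ/2 > 0. Let γ ∈ [α,β] satisfy g(γ) = (g(α)+g(β))/2 and define U₀ = g(α) on [α,γ), U₀ = g(β) on [γ,β]. Let δ ∈ (0,1) and, for any α ≤ x₁ ≤ x₂ ≤ β, define v = g(α) on [α,x₁), v =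 g(α)+δρ on [x₁,x₂), v = g(β) on [x₂,β]. Then K(δρ) + K((1−δ)ρ) + (λ/2)∫_α^β (v−g)² dx ≥ K(ρ) + (λ/2)∫_α^β (U₀−g)² dx + C_* δ(1−δ) ρ². -/
open intervalIntegral MeasureTheory Set

/-!
Split the energy into its jump part and its fidelity part. On the jump part, (K2) applied to
`δρ` and `(1 - δ)ρ` gains `C_M δ(1 - δ)ρ²` in favour of the single jump. On the fidelity part,
`U₀(x)` is the endpoint of `{g α, g β}` nearest to `g x`, because `γ` sits where `g` crosses the
midpoint; the intermediate level `g α + δρ` of `v` can beat that nearest endpoint by at most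
`δ(1 - δ)ρ²` pointwise, so integrating over `[α, β]` loses at most `(β - α)λ/2 · δ(1 - δ)ρ²`.
-/

/-- Bias–variance: for the law putting mass `1 - t` at `a` and `t` at `b`, the mean square
distance to `y` is the square distance from its mean `a + t(b - a)` to `y` plus its variance
`t(1 - t)(b - a)²`. -/
lemma min_sq_sub_le_sq_sub_add (a b y : ℝ) {t : ℝ} (ht₀ : 0 ≤ t) (ht₁ : t ≤ 1) :
    min ((a - y) ^ 2) ((b - y) ^ 2) ≤ (a + t * (b - a) - y) ^ 2 + t * (1 - t) * (b - a) ^ 2 :=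
  calc min ((a - y) ^ 2) ((b - y) ^ 2)
      ≤ (1 - t) * (a - y) ^ 2 + t * (b - y) ^ 2 := by
        nlinarith [min_le_left ((a - y) ^ 2) ((b - y) ^ 2),
          min_le_right ((a - y) ^ 2) ((b - y) ^ 2)]
    _ = (a + t * (b - a) - y) ^ 2 + t * (1 - t) * (b - a) ^ 2 := by ring

lemma min_sq_sub_le_two_jump (a b y x x₁ x₂ : ℝ) {δ : ℝ} (hδ₀ : 0 ≤ δ) (hδ₁ : δ ≤ 1) :
    min ((a - y) ^ 2) ((b - y) ^ 2) ≤
      ((if x < x₁ then a else if x < x₂ then a + δ * (b - a) else b) - y) ^ 2 +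
        δ * (1 - δ) * (b - a) ^ 2 := by
  have hvar : 0 ≤ δ * (1 - δ) * (b - a) ^ 2 := by
    have : 0 ≤ 1 - δ := sub_nonneg.2 hδ₁
    positivity
  split_ifs
  · exact (min_le_left _ _).trans (le_add_of_nonneg_right hvar)
  · exact min_sq_sub_le_sq_sub_add a b y hδ₀ hδ₁
  · exact (min_le_right _ _).trans (le_add_of_nonneg_right hvar)

lemma sq_sub_ite_le_min_of_monotoneOn {g : ℝ → ℝ} {s : Set ℝ} (hg : MonotoneOn g s)
    {a b γ x : ℝ} (hab : a ≤ b) (hγ : γ ∈ s) (hγmid : g γ = (a + b) / 2) (hx : x ∈ s) :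
    ((if x < γ then a else b) - g x) ^ 2 ≤ min ((a - g x) ^ 2) ((b - g x) ^ 2) := by
  split_ifs with hxγ
  · have : g x ≤ g γ := hg hx hγ hxγ.le
    exact le_min le_rfl (by nlinarith)
  · have : g γ ≤ g x := hg hγ hx (not_lt.1 hxγ)
    exact le_min (by nlinarith) le_rfl

lemma add_mul_sq_le_of_subadditive_gap {K : ℝ → ℝ} {M C : ℝ}
    (hK2 : ∀ ρ₁ ρ₂ : ℝ, 0 ≤ ρ₁ → 0 ≤ ρ₂ → ρ₁ + ρ₂ ≤ M →
      K (ρ₁ + ρ₂) + C * ρ₁ * ρ₂ ≤ K ρ₁ + K ρ₂)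
    {ρ δ : ℝ} (hρ : 0 ≤ ρ) (hρM : ρ ≤ M) (hδ₀ : 0 ≤ δ) (hδ₁ : δ ≤ 1) :
    K ρ + C * (δ * (1 - δ) * ρ ^ 2) ≤ K (δ * ρ) + K ((1 - δ) * ρ) := by
  have h := hK2 (δ * ρ) ((1 - δ) * ρ) (by positivity)
    (mul_nonneg (sub_nonneg.2 hδ₁) hρ) (by linarith)
  rw [← add_mul, add_sub_cancel, one_mul] at h
  linarith

lemma intervalIntegrable_sq_sub {f g : ℝ → ℝ} {α β a b : ℝ} (hαβ : α ≤ β) (hf : Measurable f)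
    (hg : ContinuousOn g (Icc α β)) (hfab : ∀ x, f x ∈ Icc a b)
    (hgab : ∀ x ∈ Icc α β, g x ∈ Icc a b) :
    IntervalIntegrable (fun x => (f x - g x) ^ 2) volume α β := by
  rw [intervalIntegrable_iff_integrableOn_Ioc_of_le hαβ]
  have hmeas : AEStronglyMeasurable (fun x => (f x - g x) ^ 2) (volume.restrict (Ioc α β)) :=
    ((hf.aemeasurable.sub ((hg.mono Ioc_subset_Icc_self).aemeasurable measurableSet_Ioc)).pow_const
      2).aestronglyMeasurable
  refine (integrable_const ((b - a) ^ 2)).mono' hmeas ?_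
  filter_upwards [ae_restrict_mem measurableSet_Ioc] with x hx
  obtain ⟨hfa, hfb⟩ := hfab x
  obtain ⟨hga, hgb⟩ := hgab x (Ioc_subset_Icc_self hx)
  rw [Real.norm_eq_abs, abs_of_nonneg (sq_nonneg _)]
  nlinarith

lemma integral_le_integral_add_of_le_add {f h : ℝ → ℝ} {α β c : ℝ} (hαβ : α ≤ β)
    (hf : IntervalIntegrable f volume α β) (hh : IntervalIntegrable h volume α β)
    (hfh : ∀ x ∈ Icc α β, f x ≤ h x + c) :
    ∫ x in α..β, f x ≤ (∫ x in α..β, h x) + (β - α) * c := by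
  have := integral_mono_on hαβ hf (hh.add intervalIntegrable_const) hfh
  rwa [integral_add hh intervalIntegrable_const, intervalIntegral.integral_const, smul_eq_mul] at this

theorem two_jump_energy_bound_general (K : ℝ → ℝ)
    (M C lam : ℝ) (hlam : 0 < lam)
    (hK2 : ∀ ρ₁ ρ₂ : ℝ, 0 ≤ ρ₁ → 0 ≤ ρ₂ → ρ₁ + ρ₂ ≤ M →
      K (ρ₁ + ρ₂) + C * ρ₁ * ρ₂ ≤ K ρ₁ + K ρ₂)
    (α β : ℝ) (hab : α < β) (g : ℝ → ℝ)
    (hgc : ContinuousOn g (Set.Icc α β)) (hgm : MonotoneOn g (Set.Icc α β))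
    (hρM : g β - g α ≤ M)
    (γ : ℝ) (hγ : γ ∈ Set.Icc α β) (hγmid : g γ = (g α + g β) / 2)
    (δ : ℝ) (hδ : δ ∈ Set.Ioo (0 : ℝ) 1)
    (x₁ x₂ : ℝ) :
    K (g β - g α) +
        (lam / 2) * (∫ x in α..β, ((if x < γ then g α else g β) - g x) ^ 2) +
        (C - (β - α) * lam / 2) * δ * (1 - δ) * (g β - g α) ^ 2 ≤
      K (δ * (g β - g α)) + K ((1 - δ) * (g β - g α)) +
        (lam / 2) * ∫ x in α..β,
          ((if x < x₁ then g α else if x < x₂ then g α + δ * (g β - g α) else g β) - g x) ^ 2 := by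
  obtain ⟨hδ₀, hδ₁⟩ := hδ
  have hgrange : ∀ x ∈ Icc α β, g x ∈ Icc (g α) (g β) := fun x hx =>
    ⟨hgm (left_mem_Icc.2 hab.le) hx hx.1, hgm hx (right_mem_Icc.2 hab.le) hx.2⟩
  have hαβ : g α ≤ g β := (hgrange β (right_mem_Icc.2 hab.le)).1
  have hjump := add_mul_sq_le_of_subadditive_gap hK2 (sub_nonneg.2 hαβ) hρM hδ₀.le hδ₁.le
  have hfid := integral_le_integral_add_of_le_add hab.le
    (intervalIntegrable_sq_sub hab.le
      (measurable_const.ite measurableSet_Iio measurable_const) hgc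
      (fun x => by split_ifs <;> simp [hαβ]) hgrange)
    (intervalIntegrable_sq_sub hab.le
      (measurable_const.ite measurableSet_Iio
        (measurable_const.ite measurableSet_Iio measurable_const)) hgc
      (fun x => by split_ifs <;> constructor <;> nlinarith) hgrange)
    fun x hx => (sq_sub_ite_le_min_of_monotoneOn hgm hαβ hγ hγmid hx).trans
      (min_sq_sub_le_two_jump _ _ _ x x₁ x₂ hδ₀.le hδ₁.le)
  linear_combination hjump + (lam / 2) * hfid

/-- Energy comparison between the one-jump step function `U₀` and a two-jump competitor `v`
(Lemma 3.6): under (K1), (K2) with constant `C = C_M`, for continuous non-decreasing `g`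
with `ρ = g(β)-g(α) ≤ M` and `C_* = C_M - (β-α)λ/2 > 0`,
`TV_{Kg}(v) ≥ TV_{Kg}(U₀) + C_* δ(1-δ)ρ²`. -/
theorem two_jump_energy_bound (K : ℝ → ℝ)
    (hKnn : ∀ x, 0 ≤ x → 0 ≤ K x) (hK0 : K 0 = 0)
    (hKmono : ∀ x y, 0 ≤ x → x ≤ y → K x ≤ K y)
    (M C lam : ℝ) (hM : 0 < M) (hC : 0 < C) (hlam : 0 < lam)
    (hK2 : ∀ ρ₁ ρ₂ : ℝ, 0 ≤ ρ₁ → 0 ≤ ρ₂ → ρ₁ + ρ₂ ≤ M →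
      K (ρ₁ + ρ₂) + C * ρ₁ * ρ₂ ≤ K ρ₁ + K ρ₂)
    (α β : ℝ) (hab : α < β) (g : ℝ → ℝ)
    (hgc : ContinuousOn g (Set.Icc α β)) (hgm : MonotoneOn g (Set.Icc α β))
    (hρM : g β - g α ≤ M)
    (hCstar : 0 < C - (β - α) * lam / 2)
    (γ : ℝ) (hγ : γ ∈ Set.Icc α β) (hγmid : g γ = (g α + g β) / 2)
    (δ : ℝ) (hδ : δ ∈ Set.Ioo (0 : ℝ) 1)
    (x₁ x₂ : ℝ) (h1 : α ≤ x₁) (h12 : x₁ ≤ x₂) (h2 : x₂ ≤ β) :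
    K (g β - g α) +
        (lam / 2) * (∫ x in α..β, ((if x < γ then g α else g β) - g x) ^ 2) +
        (C - (β - α) * lam / 2) * δ * (1 - δ) * (g β - g α) ^ 2 ≤
      K (δ * (g β - g α)) + K ((1 - δ) * (g β - g α)) +
        (lam / 2) * ∫ x in α..β,
          ((if x < x₁ then g α else if x < x₂ then g α + δ * (g β - g α) else g β) - g x) ^ 2 :=
  two_jump_energy_bound_general K M C lam hlam hK2 α β hab g hgc hgm hρM γ hγ hγmid δ hδ x₁ x₂
end

section
/- Let K:[0,2]→[0,∞) and λ>0. Define P(z) = −(K(1−z)+K(1+z)) for z ∈ [−1,1], and assume P is continuously differentiable on [−1,1] and satisfies P'(μz) < μ P'(z) for all z ∈ (0,1] and μ ∈ (0,1). Define E(z) = K(1−z)+K(1+z) + (λ/2)(z²/2 + 1/6) for z ∈ [−1,1]. Then E(z) > min(E(0), E(1)) for every z ∈ (−1,1) with z ≠ 0. -/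
/-!
Since `E' = (λ/2) z - P'` and condition (Q) says that `P'(z)/z` is strictly increasing on `(0, 1]`,
the derivative of `E` changes sign on `(0, 1)` at most once, from positive to negative. So `E` is
strictly increasing and then strictly decreasing on `[0, 1]`, and its minimum there is attained
only at the endpoints. `E` is even, which covers `(-1, 0)`.
-/

open Set

theorem min_lt_of_deriv_pos_of_deriv_nonneg {f f' : ℝ → ℝ} {a b : ℝ}
    (hf : ContinuousOn f (Icc a b)) (hf' : ∀ x ∈ Ioo a b, HasDerivAt f (f' x) x)
    (hsign : ∀ x ∈ Ioo a b, ∀ y ∈ Ioo a b, x < y → 0 ≤ f' y → 0 < f' x) :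
    ∀ z ∈ Ioo a b, min (f a) (f b) < f z := by
  intro z ⟨haz, hzb⟩
  have hderiv : ∀ x ∈ Ioo a b, deriv f x = f' x := fun x hx => (hf' x hx).deriv
  rcases le_or_gt (f' z) 0 with hz | hz
  · have hanti : StrictAntiOn f (Icc z b) := by
      refine strictAntiOn_of_deriv_neg (convex_Icc z b)
        (hf.mono (Icc_subset_Icc haz.le le_rfl)) fun y hy => ?_
      rw [interior_Icc] at hy
      have hy' : y ∈ Ioo a b := ⟨haz.trans hy.1, hy.2⟩
      rw [hderiv y hy']
      by_contra! hy0
      exact (hsign z ⟨haz, hzb⟩ y hy' hy.1 hy0).not_ge hz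
    exact (min_le_right _ _).trans_lt
      (hanti ⟨le_rfl, hzb.le⟩ ⟨hzb.le, le_rfl⟩ hzb)
  · have hmono : StrictMonoOn f (Icc a z) := by
      refine strictMonoOn_of_deriv_pos (convex_Icc a z)
        (hf.mono (Icc_subset_Icc le_rfl hzb.le)) fun x hx => ?_
      rw [interior_Icc] at hx
      have hx' : x ∈ Ioo a b := ⟨hx.1, hx.2.trans hzb⟩
      rw [hderiv x hx']
      exact hsign x hx' z ⟨haz, hzb⟩ hx.2 hz.le
    exact (min_le_left _ _).trans_lt
      (hmono ⟨le_rfl, haz.le⟩ ⟨haz.le, le_rfl⟩ haz)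

theorem lt_mul_of_le_mul_of_superhomogeneous {p : ℝ → ℝ} {b c : ℝ}
    (hp : ∀ z ∈ Ioc 0 b, ∀ μ ∈ Ioo (0 : ℝ) 1, p (μ * z) < μ * p z)
    {x y : ℝ} (hx : 0 < x) (hxy : x < y) (hyb : y ≤ b) (hy : p y ≤ c * y) :
    p x < c * x := by
  have hy0 : 0 < y := hx.trans hxy
  have hμ : x / y ∈ Ioo (0 : ℝ) 1 := ⟨div_pos hx hy0, (div_lt_one hy0).2 hxy⟩
  calc p x = p (x / y * y) := by rw [div_mul_cancel₀ x hy0.ne']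
    _ < x / y * p y := hp y ⟨hy0, hyb⟩ _ hμ
    _ ≤ x / y * (c * y) := mul_le_mul_of_nonneg_left hy hμ.1.le
    _ = c * x := by field_simp

theorem hasDerivWithinAt_energy {K P P' E : ℝ → ℝ} {lam : ℝ} {s : Set ℝ} {x : ℝ}
    (hP : ∀ z, P z = -(K (1 - z) + K (1 + z)))
    (hE : ∀ z, E z = K (1 - z) + K (1 + z) + (lam / 2) * (z ^ 2 / 2 + 1 / 6))
    (hPx : HasDerivWithinAt P (P' x) s x) :
    HasDerivWithinAt E (lam / 2 * x - P' x) s x := by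
  have hE' : E = fun y => lam / 2 * (y ^ 2 / 2 + 1 / 6) - P y := by
    funext y; rw [hE, hP]; ring
  have hquad : HasDerivAt (fun y : ℝ => lam / 2 * (y ^ 2 / 2 + 1 / 6)) (lam / 2 * x) x := by
    exact ((((hasDerivAt_pow 2 x).div_const 2).add_const (1 / 6)).const_mul (lam / 2)).congr_deriv
      (by norm_num)
  rw [hE']
  exact hquad.hasDerivWithinAt.sub hPx

theorem energy_min_only_at_endpoints_general (K : ℝ → ℝ)
    (lam : ℝ)
    (P P' : ℝ → ℝ)
    (hP : ∀ z, P z = -(K (1 - z) + K (1 + z)))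
    (hderiv : ∀ z ∈ Set.Icc (-1 : ℝ) 1, HasDerivWithinAt P (P' z) (Set.Icc (-1 : ℝ) 1) z)
    (hsuper : ∀ z ∈ Set.Ioc (0 : ℝ) 1, ∀ μ ∈ Set.Ioo (0 : ℝ) 1, P' (μ * z) < μ * P' z)
    (E : ℝ → ℝ)
    (hE : ∀ z, E z = K (1 - z) + K (1 + z) + (lam / 2) * (z ^ 2 / 2 + 1 / 6)) :
    ∀ z ∈ Set.Ioo (-1 : ℝ) 1, z ≠ 0 → min (E 0) (E 1) < E z := by
  have hEderiv : ∀ x ∈ Icc (-1 : ℝ) 1, HasDerivWithinAt E (lam / 2 * x - P' x) (Icc (-1) 1) x :=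
    fun x hx => hasDerivWithinAt_energy hP hE (hderiv x hx)
  have hunit : ∀ z ∈ Ioo (0 : ℝ) 1, min (E 0) (E 1) < E z := by
    refine min_lt_of_deriv_pos_of_deriv_nonneg
      (fun x hx => (hEderiv x ⟨by linarith [hx.1], hx.2⟩).continuousWithinAt.mono
        (Icc_subset_Icc (by norm_num) le_rfl))
      (fun x hx => (hEderiv x ⟨by linarith [hx.1], hx.2.le⟩).hasDerivAt
        (Icc_mem_nhds (by linarith [hx.1]) hx.2)) ?_
    intro x hx y hy hxy hy0
    have hPx := lt_mul_of_le_mul_of_superhomogeneous hsuper hx.1 hxy hy.2.le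
      (c := lam / 2) (by linarith)
    linarith
  have heven : ∀ z, E |z| = E z := fun z => by
    rcases abs_choice z with h | h
    · rw [h]
    · rw [h, hE, hE, neg_sq, sub_neg_eq_add, ← sub_eq_add_neg, add_comm (K _)]
  intro z hz hz0
  rw [← heven z]
  exact hunit |z| ⟨abs_pos.2 hz0, abs_lt.2 hz⟩

/-- Key step of Theorem 4.9: if `P(z) = -(K(1-z)+K(1+z))` is C¹ on `[-1,1]` with
derivative `P'` satisfying `P'(μz) < μ P'(z)` for `z ∈ (0,1]`, `μ ∈ (0,1)`, then the
energy `E(z) = K(1-z)+K(1+z) + (λ/2)(z²/2 + 1/6)` satisfies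
`E(z) > min(E(0), E(1))` for all `z ∈ (-1,1)` with `z ≠ 0`. -/
theorem energy_min_only_at_endpoints (K : ℝ → ℝ)
    (hKnn : ∀ ρ ∈ Set.Icc (0 : ℝ) 2, 0 ≤ K ρ)
    (lam : ℝ) (hlam : 0 < lam)
    (P P' : ℝ → ℝ)
    (hP : ∀ z, P z = -(K (1 - z) + K (1 + z)))
    (hderiv : ∀ z ∈ Set.Icc (-1 : ℝ) 1, HasDerivWithinAt P (P' z) (Set.Icc (-1 : ℝ) 1) z)
    (hcont : ContinuousOn P' (Set.Icc (-1 : ℝ) 1))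
    (hsuper : ∀ z ∈ Set.Ioc (0 : ℝ) 1, ∀ μ ∈ Set.Ioo (0 : ℝ) 1, P' (μ * z) < μ * P' z)
    (E : ℝ → ℝ)
    (hE : ∀ z, E z = K (1 - z) + K (1 + z) + (lam / 2) * (z ^ 2 / 2 + 1 / 6)) :
    ∀ z ∈ Set.Ioo (-1 : ℝ) 1, z ≠ 0 → min (E 0) (E 1) < E z :=
  energy_min_only_at_endpoints_general K lam P P' hP hderiv hsuper E hE
end

section
/- Let L>0 and λ>0, and define E(m) = 1/(L/m + 1) + (λ/24)(L/m)² for real m > 0. Then E(1) = E(2) if and only if λ = 32/(L(L+1)(L+2)). Moreover, if λ = 32/(L(L+1)(L+2)), then there exists m₀ ∈ (1,2) such that E is strictly decreasing on (0,m₀] and strictly increasing on [m₀,∞); in particular E(1) = E(2) < E(m) for every integer m ≥ 3. -/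
/-!
In terms of the jump size `t = L/m`, `E m = f t` with `f = stepEnergy λ`, and `f t₂ - f t₁`
has the sign of `(t₂ - t₁)(λ (t₁+t₂)(t₁+1)(t₂+1) - 24)`. Hence `f` decreases up to the unique
`t* > 0` with `λ t* (t*+1)² = 12` and increases after it, and `E(1) = E(2)` becomes
`λ L (L+1)(L+2) = 32`. For this `λ` the intermediate value theorem puts `t*` in `(L/2, L)`,
so `m₀ = L/t*` lies in `(1, 2)`.
-/

open Set

noncomputable def stepEnergy (lam t : ℝ) : ℝ := 1 / (t + 1) + lam / 24 * t ^ 2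

lemma stepEnergy_sub (lam : ℝ) {t₁ t₂ : ℝ} (h₁ : t₁ + 1 ≠ 0) (h₂ : t₂ + 1 ≠ 0) :
    stepEnergy lam t₂ - stepEnergy lam t₁ =
      (t₂ - t₁) * (lam * ((t₁ + t₂) * ((t₁ + 1) * (t₂ + 1))) - 24) /
        (24 * ((t₁ + 1) * (t₂ + 1))) := by
  unfold stepEnergy
  field_simp
  ring

section Critical

variable {lam ts : ℝ} (hlam : 0 < lam) (hs : lam * ts * (ts + 1) ^ 2 = 12)
include hlam hs

lemma stepEnergy_strictAntiOn : StrictAntiOn (stepEnergy lam) (Ioc 0 ts) := by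
  rintro a ⟨ha, hat⟩ b ⟨hb, hbt⟩ hab
  have hprod : (a + 1) * (b + 1) ≤ (ts + 1) * (ts + 1) :=
    mul_le_mul (by linarith) (by linarith) (by linarith) (by linarith)
  have hfactor :
      lam * ((a + b) * ((a + 1) * (b + 1))) < lam * ((ts + ts) * ((ts + 1) * (ts + 1))) :=
    mul_lt_mul_of_pos_left (mul_lt_mul (by linarith) hprod (by positivity) (by linarith)) hlam
  have hsign :
      (b - a) * (lam * ((a + b) * ((a + 1) * (b + 1))) - 24) / (24 * ((a + 1) * (b + 1))) < 0 :=
    div_neg_of_neg_of_pos (mul_neg_of_pos_of_neg (by linarith) (by linarith)) (by positivity)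
  linarith [stepEnergy_sub lam (t₁ := a) (t₂ := b) (by linarith) (by linarith)]

lemma stepEnergy_strictMonoOn (hts : 0 < ts) : StrictMonoOn (stepEnergy lam) (Ici ts) := by
  rintro a (hta : ts ≤ a) b (htb : ts ≤ b) hab
  have hprod : (ts + 1) * (ts + 1) ≤ (a + 1) * (b + 1) :=
    mul_le_mul (by linarith) (by linarith) (by linarith) (by linarith)
  have hfactor :
      lam * ((ts + ts) * ((ts + 1) * (ts + 1))) < lam * ((a + b) * ((a + 1) * (b + 1))) :=
    mul_lt_mul_of_pos_left (mul_lt_mul (by linarith) hprod (by positivity) (by linarith)) hlam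
  have hpos : 0 < 24 * ((a + 1) * (b + 1)) :=
    mul_pos (by norm_num) (mul_pos (by linarith) (by linarith))
  have hsign :
      0 < (b - a) * (lam * ((a + b) * ((a + 1) * (b + 1))) - 24) / (24 * ((a + 1) * (b + 1))) :=
    div_pos (mul_pos (by linarith) (by linarith)) hpos
  linarith [stepEnergy_sub lam (t₁ := a) (t₂ := b) (by linarith) (by linarith)]

end Critical

lemma stepEnergy_eq_half_iff {lam L : ℝ} (hL : 0 < L) :
    stepEnergy lam L = stepEnergy lam (L / 2) ↔ lam = 32 / (L * (L + 1) * (L + 2)) := by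
  rw [← sub_eq_zero, stepEnergy_sub lam (by linarith) (by linarith), div_eq_zero_iff,
    or_iff_left (by positivity), mul_eq_zero, or_iff_right (by linarith), sub_eq_zero,
    eq_div_iff (by positivity)]
  constructor
  · intro h; linear_combination (4 / 3 : ℝ) * h
  · intro h; linear_combination (3 / 4 : ℝ) * h

lemma StrictMonoOn.comp_const_div {f : ℝ → ℝ} {c t : ℝ} (hf : StrictMonoOn f (Ici t))
    (hc : 0 < c) (ht : 0 < t) : StrictAntiOn (fun m ↦ f (c / m)) (Ioc 0 (c / t)) := by
  rintro a ⟨ha, -⟩ b ⟨hb, hbt⟩ hab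
  have hlt : c / b < c / a := div_lt_div_of_pos_left hc ha hab
  have htb : t ≤ c / b := by
    rw [le_div_iff₀ hb]
    linarith [(le_div_iff₀ ht).mp hbt]
  exact hf htb (htb.trans hlt.le) hlt

lemma StrictAntiOn.comp_const_div {f : ℝ → ℝ} {c t : ℝ} (hf : StrictAntiOn f (Ioc 0 t))
    (hc : 0 < c) (ht : 0 < t) : StrictMonoOn (fun m ↦ f (c / m)) (Ici (c / t)) := by
  rintro a (hta : c / t ≤ a) b - hab
  have ha : 0 < a := (div_pos hc ht).trans_le hta
  have hlt : c / b < c / a := div_lt_div_of_pos_left hc ha hab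
  have hat : c / a ≤ t := by
    rw [div_le_iff₀ ha]
    linarith [(div_le_iff₀ ht).mp hta]
  exact hf ⟨div_pos hc (ha.trans hab), hlt.le.trans hat⟩ ⟨div_pos hc ha, hat⟩ hlt

/-- Proposition 4.11: for `E(m) = 1/(L/m + 1) + (λ/24)(L/m)²` (`m > 0`),
`E(1) = E(2)` iff `λ = 32/(L(L+1)(L+2))`; and for this critical `λ` there is
`m₀ ∈ (1,2)` such that `E` is strictly decreasing on `(0,m₀]` and strictly increasing
on `[m₀,∞)`; in particular `E(1) = E(2) < E(m)` for every integer `m ≥ 3`. -/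
theorem critical_lambda (L lam : ℝ) (hL : 0 < L) (hlam : 0 < lam)
    (E : ℝ → ℝ)
    (hE : ∀ m : ℝ, 0 < m → E m = 1 / (L / m + 1) + (lam / 24) * (L / m) ^ 2) :
    (E 1 = E 2 ↔ lam = 32 / (L * (L + 1) * (L + 2))) ∧
      (lam = 32 / (L * (L + 1) * (L + 2)) →
        (∃ m₀ ∈ Set.Ioo (1 : ℝ) 2,
          StrictAntiOn E (Set.Ioc 0 m₀) ∧ StrictMonoOn E (Set.Ici m₀)) ∧
        (E 1 = E 2 ∧ ∀ m : ℕ, 3 ≤ m → E 1 < E (m : ℝ))) := by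
  have hE' : ∀ m, 0 < m → E m = stepEnergy lam (L / m) := hE
  have hE12 : E 1 = E 2 ↔ lam = 32 / (L * (L + 1) * (L + 2)) := by
    rw [hE' 1 one_pos, hE' 2 two_pos, div_one]
    exact stepEnergy_eq_half_iff hL
  refine ⟨hE12, fun hcrit ↦ ?_⟩
  have hmul : lam * L * (L + 1) * (L + 2) = 32 := by
    rw [hcrit]; field_simp
  have hlow : lam * (L / 2) * (L / 2 + 1) ^ 2 < 12 := by nlinarith [mul_pos hlam hL]
  have hhigh : 12 < lam * L * (L + 1) ^ 2 := by nlinarith [mul_pos hlam hL]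
  obtain ⟨ts, ⟨hts₁, hts₂⟩, hs⟩ :=
    intermediate_value_Ioo (f := fun t ↦ lam * t * (t + 1) ^ 2) (by linarith) (by fun_prop)
      ⟨hlow, hhigh⟩
  have hts : 0 < ts := by linarith
  have hm₀ : L / ts ∈ Ioo (1 : ℝ) 2 :=
    ⟨(one_lt_div hts).mpr hts₂, (div_lt_iff₀ hts).mpr (by linarith)⟩
  have hanti : StrictAntiOn E (Ioc 0 (L / ts)) :=
    ((stepEnergy_strictMonoOn hlam hs hts).comp_const_div hL hts).congr
      fun m hm ↦ (hE' m hm.1).symm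
  have hmono : StrictMonoOn E (Ici (L / ts)) :=
    ((stepEnergy_strictAntiOn hlam hs).comp_const_div hL hts).congr
      fun m hm ↦ (hE' m ((zero_lt_one.trans hm₀.1).trans_le hm)).symm
  refine ⟨⟨L / ts, hm₀, hanti, hmono⟩, hE12.mpr hcrit, fun m hm ↦ ?_⟩
  have hm3 : (3 : ℝ) ≤ m := by exact_mod_cast hm
  rw [hE12.mpr hcrit]
  exact hmono (mem_Ici.mpr hm₀.2.le) (mem_Ici.mpr (by linarith [hm₀.2])) (by linarith)
end

section
/- Let K:[0,∞)→[0,∞) be non-decreasing with K(0)=0, let M>0 and C_M>0 satisfy K(ρ₁)+K(ρ₂) ≥ K(ρ₁+ρ₂)+C_M ρ₁ρ₂ for all ρ₁,ρ₂ ≥ 0 with ρ₁+ρ₂ ≤ M. Let α<β, let g:[α,β]→ℝ be continuous and non-decreasing with ρ := g(β)−g(α) ≤ M, let λ>0 and assume C_* := C_M − λ(β−α)/2 > 0. Let γ ∈ [α,β] satisfy g(γ) = (g(α)+g(β))/2 and define U₀ = g(α) on [α,γ), U₀ = g(β) on [γ,β]. Let v be a non-decreasing piecewise constant function on [α,β]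 with jump points α < z₁ < ⋯ < z_n < β and jump sizes ρ_i > 0 (1 ≤ i ≤ n), equal to g(α) on [α,z₁) and to g(β) on [z_n,β] (so that ∑_{i=1}^n ρ_i = ρ). Then ∑_{i=1}^n K(ρ_i) + (λ/2)∫_α^β (v−g)² dx ≥ K(ρ) + (λ/2)∫_α^β (U₀−g)² dx + C_* ∑_{1≤i<j≤n} ρ_i ρ_j. -/
/-!
Writing `s(x)` for the total size of the jumps of `v` up to `x`, so that `v = g(α) + s`,
the one-jump profile `U₀` beats `v` pointwise up to the error `s (ρ - s)`: on the side of `γ`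
where `g` lies below the midpoint value this is, with `a = g(α)`, `b = g(β)`, `y = g(x)`,
`(a + s - y)² + s (b - a - s) - (a - y)² = s (a + b - 2y)`, and symmetrically on the other side.
Splitting the jumps into those before and after `x` shows `s (ρ - s) ≤ ∑_{i<j} ρᵢ ρⱼ`, so the
fidelity term of `U₀` exceeds that of `v` by at most `(β - α) ∑_{i<j} ρᵢ ρⱼ`. Iterating (K2)
gains `C_M ∑_{i<j} ρᵢ ρⱼ` in the jump part, which pays for this loss.
-/

open Finset MeasureTheory

section PairSum

variable {R : Type*}

def pairSum [Mul R] [AddCommMonoid R] (ρ : ℕ → R) (n : ℕ) : R :=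
  ∑ i ∈ Icc 1 n, ∑ j ∈ Icc (i + 1) n, ρ i * ρ j

theorem pairSum_succ [NonUnitalNonAssocSemiring R] (ρ : ℕ → R) (n : ℕ) :
    pairSum ρ (n + 1) = pairSum ρ n + (∑ i ∈ Icc 1 n, ρ i) * ρ (n + 1) := by
  rw [pairSum, pairSum, sum_Icc_succ_top (by omega : 1 ≤ n + 1),
    Icc_eq_empty_of_lt (Nat.lt_succ_self (n + 1)), sum_empty, add_zero, sum_mul,
    ← sum_add_distrib]
  refine sum_congr rfl fun i hi => ?_
  rw [sum_Icc_succ_top (by simp only [mem_Icc] at hi; omega)]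

theorem two_mul_pairSum [CommRing R] (ρ : ℕ → R) (n : ℕ) :
    2 * pairSum ρ n = (∑ i ∈ Icc 1 n, ρ i) ^ 2 - ∑ i ∈ Icc 1 n, ρ i ^ 2 := by
  induction n with
  | zero => simp [pairSum]
  | succ n ih =>
    rw [pairSum_succ, sum_Icc_succ_top (by omega) ρ,
      sum_Icc_succ_top (by omega) fun i => ρ i ^ 2]
    linear_combination ih

theorem sum_mul_sub_sum_le_pairSum [CommRing R] [LinearOrder R]
    [IsStrictOrderedRing R] {ρ : ℕ → R} {n : ℕ} (hρ : ∀ i ∈ Icc 1 n, 0 ≤ ρ i)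
    {S : Finset ℕ} (hS : S ⊆ Icc 1 n) :
    (∑ i ∈ S, ρ i) * ((∑ i ∈ Icc 1 n, ρ i) - ∑ i ∈ S, ρ i) ≤ pairSum ρ n := by
  have hsplit := sum_sdiff hS (f := ρ)
  have hsplit_sq := sum_sdiff hS (f := fun i => ρ i ^ 2)
  have hS_sq : ∑ i ∈ S, ρ i ^ 2 ≤ (∑ i ∈ S, ρ i) ^ 2 :=
    sum_sq_le_sq_sum_of_nonneg fun i hi => hρ i (hS hi)
  have hcompl_sq : ∑ i ∈ Icc 1 n \ S, ρ i ^ 2 ≤ (∑ i ∈ Icc 1 n \ S, ρ i) ^ 2 :=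
    sum_sq_le_sq_sum_of_nonneg fun i hi => hρ i (sdiff_subset hi)
  have htwo := two_mul_pairSum ρ n
  rw [← hsplit, ← hsplit_sq] at htwo
  rw [← hsplit]
  linarith

theorem apply_sum_add_mul_pairSum_le {K : ℝ → ℝ} (hK0 : K 0 = 0) {M C : ℝ}
    (hK2 : ∀ ρ₁ ρ₂ : ℝ, 0 ≤ ρ₁ → 0 ≤ ρ₂ → ρ₁ + ρ₂ ≤ M →
      K (ρ₁ + ρ₂) + C * ρ₁ * ρ₂ ≤ K ρ₁ + K ρ₂)
    {ρ : ℕ → ℝ} {n : ℕ} (hρ : ∀ i ∈ Icc 1 n, 0 ≤ ρ i) (hsum : ∑ i ∈ Icc 1 n, ρ i ≤ M) :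
    K (∑ i ∈ Icc 1 n, ρ i) + C * pairSum ρ n ≤ ∑ i ∈ Icc 1 n, K (ρ i) := by
  induction n with
  | zero => simp [pairSum, hK0]
  | succ n ih =>
    have hρ' : ∀ i ∈ Icc 1 n, 0 ≤ ρ i := fun i hi =>
      hρ i (Icc_subset_Icc_right n.le_succ hi)
    have hlast : 0 ≤ ρ (n + 1) := hρ _ (by simp)
    rw [sum_Icc_succ_top (by omega)] at hsum ⊢
    rw [sum_Icc_succ_top (by omega), pairSum_succ]
    have hsplit := hK2 _ _ (sum_nonneg hρ') hlast hsum
    have hrest := ih hρ' (by linarith)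
    linarith

end PairSum

section JumpSum

noncomputable def jumpSum (z ρ : ℕ → ℝ) (n : ℕ) (x : ℝ) : ℝ :=
  ∑ i ∈ Icc 1 n, if z i ≤ x then ρ i else 0

variable {z ρ : ℕ → ℝ} {n : ℕ}

theorem jumpSum_nonneg (hρ : ∀ i ∈ Icc 1 n, 0 ≤ ρ i) (x : ℝ) : 0 ≤ jumpSum z ρ n x :=
  sum_nonneg fun i hi => by split_ifs <;> simp [hρ i hi]

theorem jumpSum_le_sum (hρ : ∀ i ∈ Icc 1 n, 0 ≤ ρ i) (x : ℝ) :
    jumpSum z ρ n x ≤ ∑ i ∈ Icc 1 n, ρ i :=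
  sum_le_sum fun i hi => by split_ifs <;> simp [hρ i hi]

theorem jumpSum_monotone (hρ : ∀ i ∈ Icc 1 n, 0 ≤ ρ i) : Monotone (jumpSum z ρ n) :=
  fun x y hxy => sum_le_sum fun i hi => by
    split_ifs with hx hy
    · exact le_rfl
    · exact absurd (hx.trans hxy) hy
    · exact hρ i hi
    · exact le_rfl

theorem jumpSum_mul_sub_le_pairSum (hρ : ∀ i ∈ Icc 1 n, 0 ≤ ρ i) (x : ℝ) :
    jumpSum z ρ n x * ((∑ i ∈ Icc 1 n, ρ i) - jumpSum z ρ n x) ≤ pairSum ρ n := by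
  simpa only [jumpSum, sum_filter] using
    sum_mul_sub_sum_le_pairSum hρ (filter_subset (fun i => z i ≤ x) (Icc 1 n))

end JumpSum

theorem MonotoneOn.intervalIntegrable_sub_sq {f g : ℝ → ℝ} {a b : ℝ} (hab : a ≤ b)
    (hf : MonotoneOn f (Set.Icc a b)) (hg : MonotoneOn g (Set.Icc a b)) :
    IntervalIntegrable (fun x => (f x - g x) ^ 2) volume a b := by
  rw [← Set.uIcc_of_le hab] at hf hg
  have hint := hf.intervalIntegrable.sub hg.intervalIntegrable (μ := volume)
  rw [Set.uIcc_of_le hab] at hf hg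
  rw [intervalIntegrable_iff_integrableOn_Ioc_of_le hab] at hint ⊢
  have hbound : ∀ x ∈ Set.Ioc a b, ‖f x - g x‖ ≤ |f a - g b| + |f b - g a| := by
    intro x hx
    have hx' := Set.Ioc_subset_Icc_self hx
    have hfa := hf (Set.left_mem_Icc.2 hab) hx' hx'.1
    have hfb := hf hx' (Set.right_mem_Icc.2 hab) hx'.2
    have hga := hg (Set.left_mem_Icc.2 hab) hx' hx'.1
    have hgb := hg hx' (Set.right_mem_Icc.2 hab) hx'.2
    rw [Real.norm_eq_abs, abs_le]
    constructor <;> linarith [neg_abs_le (f a - g b), le_abs_self (f b - g a),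
      abs_nonneg (f a - g b), abs_nonneg (f b - g a)]
  simp only [sq]
  exact hint.bdd_mul hint.aestronglyMeasurable (ae_restrict_of_forall_mem measurableSet_Ioc hbound)

section OneJumpProfile

variable {g : ℝ → ℝ} {α β γ : ℝ}

theorem monotone_ite_lt {a b : ℝ} (hab : a ≤ b) (γ : ℝ) :
    Monotone fun x : ℝ => if x < γ then a else b := by
  intro x y hxy
  dsimp only
  split_ifs with hx hy
  · exact le_rfl
  · exact hab
  · exact absurd (lt_of_le_of_lt hxy ‹y < γ›) hx
  · exact le_rfl

theorem ite_lt_sub_sq_le (hgm : MonotoneOn g (Set.Icc α β)) (hγ : γ ∈ Set.Icc α β)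
    (hγmid : g γ = (g α + g β) / 2) {x : ℝ} (hx : x ∈ Set.Icc α β) {s : ℝ} (hs0 : 0 ≤ s)
    (hs : s ≤ g β - g α) :
    ((if x < γ then g α else g β) - g x) ^ 2 ≤ (g α + s - g x) ^ 2 + s * (g β - g α - s) := by
  split_ifs with hxγ
  · have hlow : g x ≤ g γ := hgm hx hγ hxγ.le
    nlinarith [mul_nonneg hs0 (by linarith : 0 ≤ g α + g β - 2 * g x)]
  · have hhigh : g γ ≤ g x := hgm hγ hx (not_lt.1 hxγ)
    nlinarith [mul_nonneg (by linarith : 0 ≤ g β - g α - s)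
      (by linarith : 0 ≤ 2 * g x - g α - g β)]

theorem integral_ite_lt_sub_sq_le (hab : α ≤ β) (hgm : MonotoneOn g (Set.Icc α β))
    (hγ : γ ∈ Set.Icc α β) (hγmid : g γ = (g α + g β) / 2) {z ρ : ℕ → ℝ} {n : ℕ}
    (hρ : ∀ i ∈ Icc 1 n, 0 ≤ ρ i) (hρsum : ∑ i ∈ Icc 1 n, ρ i = g β - g α) :
    ∫ x in α..β, ((if x < γ then g α else g β) - g x) ^ 2 ≤
      (∫ x in α..β, (g α + jumpSum z ρ n x - g x) ^ 2) + (β - α) * pairSum ρ n := by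
  have hgαβ : g α ≤ g β := hgm (Set.left_mem_Icc.2 hab) (Set.right_mem_Icc.2 hab) hab
  have hstep := (monotone_ite_lt hgαβ γ).monotoneOn (Set.Icc α β)
  have hv : MonotoneOn (fun x => g α + jumpSum z ρ n x) (Set.Icc α β) :=
    ((jumpSum_monotone hρ).const_add (g α)).monotoneOn _
  have hvint := hv.intervalIntegrable_sub_sq hab hgm
  have hpointwise : ∀ x ∈ Set.Icc α β, ((if x < γ then g α else g β) - g x) ^ 2 ≤
      (g α + jumpSum z ρ n x - g x) ^ 2 + pairSum ρ n := fun x hx => by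
    have hloss := jumpSum_mul_sub_le_pairSum (z := z) hρ x
    have hle := jumpSum_le_sum (z := z) hρ x
    rw [hρsum] at hloss hle
    linarith [ite_lt_sub_sq_le hgm hγ hγmid hx (jumpSum_nonneg hρ x) hle]
  have hmono := intervalIntegral.integral_mono_on hab
    (hstep.intervalIntegrable_sub_sq hab hgm) (hvint.add intervalIntegrable_const) hpointwise
  rwa [intervalIntegral.integral_add hvint intervalIntegrable_const,
    intervalIntegral.integral_const, smul_eq_mul] at hmono

end OneJumpProfile

theorem step_energy_lower_bound_general (K : ℝ → ℝ)
    (hK0 : K 0 = 0)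
    (M C lam : ℝ) (hlam : 0 < lam)
    (hK2 : ∀ ρ₁ ρ₂ : ℝ, 0 ≤ ρ₁ → 0 ≤ ρ₂ → ρ₁ + ρ₂ ≤ M →
      K (ρ₁ + ρ₂) + C * ρ₁ * ρ₂ ≤ K ρ₁ + K ρ₂)
    (α β : ℝ) (hab : α < β) (g : ℝ → ℝ)
    (hgm : MonotoneOn g (Set.Icc α β))
    (hρM : g β - g α ≤ M)
    (γ : ℝ) (hγ : γ ∈ Set.Icc α β) (hγmid : g γ = (g α + g β) / 2)
    (n : ℕ) (z ρ : ℕ → ℝ)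
    (hρpos : ∀ i, 1 ≤ i → i ≤ n → 0 < ρ i)
    (hρsum : ∑ i ∈ Finset.Icc 1 n, ρ i = g β - g α) :
    K (g β - g α) +
        (lam / 2) * (∫ x in α..β, ((if x < γ then g α else g β) - g x) ^ 2) +
        (C - lam * (β - α) / 2) *
          ∑ i ∈ Finset.Icc 1 n, ∑ j ∈ Finset.Icc (i + 1) n, ρ i * ρ j ≤
      (∑ i ∈ Finset.Icc 1 n, K (ρ i)) +
        (lam / 2) * ∫ x in α..β,
          ((g α + ∑ i ∈ Finset.Icc 1 n, if z i ≤ x then ρ i else 0) - g x) ^ 2 := by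
  have hρ : ∀ i ∈ Icc 1 n, 0 ≤ ρ i := fun i hi =>
    (hρpos i (mem_Icc.1 hi).1 (mem_Icc.1 hi).2).le
  have hjumps := apply_sum_add_mul_pairSum_le hK0 hK2 hρ (hρsum ▸ hρM)
  have hfidelity := integral_ite_lt_sub_sq_le (z := z) hab.le hgm hγ hγmid hρ hρsum
  rw [hρsum] at hjumps
  have hscaled := mul_le_mul_of_nonneg_left hfidelity (half_pos hlam).le
  simp only [pairSum, jumpSum] at hjumps hscaled
  linarith

/-- Lemma 4.1 (quantitative form): under (K1) and (K2) with constant `C = C_M`, for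
continuous non-decreasing `g` on `[α,β]` with `ρ = g(β)-g(α) ≤ M`,
`C_* = C_M - λ(β-α)/2 > 0`, `U₀` the one-jump step function jumping where
`g` attains the midpoint value, and `v` a non-decreasing step function with jump
points `α < z₁ < ⋯ < z_n < β`, jump sizes `ρᵢ > 0` and `∑ ρᵢ = ρ`, equal to `g(α)`
before the first jump, we have
`TV_{Kg}(v) ≥ TV_{Kg}(U₀) + C_* ∑_{i<j} ρᵢ ρⱼ`. -/
theorem step_energy_lower_bound (K : ℝ → ℝ)
    (hKnn : ∀ x, 0 ≤ x → 0 ≤ K x) (hK0 : K 0 = 0)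
    (hKmono : ∀ x y, 0 ≤ x → x ≤ y → K x ≤ K y)
    (M C lam : ℝ) (hM : 0 < M) (hC : 0 < C) (hlam : 0 < lam)
    (hK2 : ∀ ρ₁ ρ₂ : ℝ, 0 ≤ ρ₁ → 0 ≤ ρ₂ → ρ₁ + ρ₂ ≤ M →
      K (ρ₁ + ρ₂) + C * ρ₁ * ρ₂ ≤ K ρ₁ + K ρ₂)
    (α β : ℝ) (hab : α < β) (g : ℝ → ℝ)
    (hgc : ContinuousOn g (Set.Icc α β)) (hgm : MonotoneOn g (Set.Icc α β))
    (hρM : g β - g α ≤ M)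
    (hCstar : 0 < C - lam * (β - α) / 2)
    (γ : ℝ) (hγ : γ ∈ Set.Icc α β) (hγmid : g γ = (g α + g β) / 2)
    (n : ℕ) (hn : 1 ≤ n) (z ρ : ℕ → ℝ)
    (hz : ∀ i j, 1 ≤ i → i < j → j ≤ n → z i < z j)
    (hz1 : α < z 1) (hzn : z n < β)
    (hρpos : ∀ i, 1 ≤ i → i ≤ n → 0 < ρ i)
    (hρsum : ∑ i ∈ Finset.Icc 1 n, ρ i = g β - g α) :
    K (g β - g α) +
        (lam / 2) * (∫ x in α..β, ((if x < γ then g α else g β) - g x) ^ 2) +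
        (C - lam * (β - α) / 2) *
          ∑ i ∈ Finset.Icc 1 n, ∑ j ∈ Finset.Icc (i + 1) n, ρ i * ρ j ≤
      (∑ i ∈ Finset.Icc 1 n, K (ρ i)) +
        (lam / 2) * ∫ x in α..β,
          ((g α + ∑ i ∈ Finset.Icc 1 n, if z i ≤ x then ρ i else 0) - g x) ^ 2 :=
  step_energy_lower_bound_general K hK0 M C lam hlam hK2 α β hab g hgm hρM γ hγ hγmid n z ρ hρpos
    hρsum
end

section
/- Let K:[0,∞)→[0,∞) satisfy K(0)=0 and lim_{ρ→0+} K(ρ)/ρ = 1. Let a<b and let u:[a,b]→ℝ be continuous with finite total variation V on [a,b]. Then for every ε>0 there exist an integer n ≥ 1, points a = x₀ < x₁ < ⋯ < x_n = b and values c₁,…,c_n ∈ ℝ with c₁ = u(a) and c_n = u(b), such that the piecewise constant function w defined by w = c_i on [x_{i−1},x_i) for i < n and w = c_n on [x_{n−1},b] satisfies sup_{[a,b]} |w − u| < ε and |∑_{i=1}^{n−1} K(|c_{i+1} − c_i|) − V| < ε. -/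
/-!
Choose a partition `a = x₀ < ⋯ < xₙ = b` so fine that `u` oscillates by less than `min ε r` on
every cell, obtained by refining a nearly optimal partition for the variation by a uniform grid;
its variation sum `S` then satisfies `V - ε/2 < S ≤ V`. The step function with values
`u(x₀), …, u(xₙ)` (the last cell split once so that it ends with the value `u(b)`) has as jumps
exactly the increments of `u` along the partition, all below `r`. Near `0`, (K3) gives
`|K ρ - ρ| ≤ θ ρ`, hence `|TV_K(w) - S| ≤ θ S ≤ θ V < ε/2` for `θ = ε / (2(V + 1))`.
-/

open Set Filter Topology

theorem exists_pos_abs_sub_le_mul_of_tendsto_div {K : ℝ → ℝ} (hK0 : K 0 = 0)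
    (hK : Tendsto (fun ρ => K ρ / ρ) (𝓝[>] 0) (𝓝 1)) {θ : ℝ} (hθ : 0 < θ) :
    ∃ r > 0, ∀ ρ ∈ Ico 0 r, |K ρ - ρ| ≤ θ * ρ := by
  obtain ⟨r, hr, hKr⟩ := Metric.tendsto_nhdsWithin_nhds.1 hK θ hθ
  refine ⟨r, hr, fun ρ ⟨hρ0, hρr⟩ => ?_⟩
  rcases hρ0.eq_or_lt with rfl | hρ
  · simp [hK0]
  have hdist := hKr hρ (by rwa [Real.dist_eq, sub_zero, abs_of_pos hρ])
  rw [Real.dist_eq] at hdist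
  calc |K ρ - ρ| = |K ρ / ρ - 1| * ρ := by
        rw [← abs_of_pos hρ, ← abs_mul, abs_of_pos hρ, sub_mul, div_mul_cancel₀ _ hρ.ne', one_mul]
    _ ≤ θ * ρ := mul_le_mul_of_nonneg_right hdist.le hρ.le

theorem abs_sum_sub_sum_le_mul {ι : Type*} (s : Finset ι) {K : ℝ → ℝ} {θ r : ℝ}
    (hK : ∀ ρ ∈ Ico 0 r, |K ρ - ρ| ≤ θ * ρ) {ρ : ι → ℝ} (hρ : ∀ i ∈ s, ρ i ∈ Ico 0 r) :
    |∑ i ∈ s, K (ρ i) - ∑ i ∈ s, ρ i| ≤ θ * ∑ i ∈ s, ρ i := by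
  rw [← Finset.sum_sub_distrib, Finset.mul_sum]
  exact (Finset.abs_sum_le_sum_abs _ _).trans (Finset.sum_le_sum fun i hi => hK _ (hρ i hi))

theorem Finset.exists_monotone_strictMonoOn_image_Iic_eq {α : Type*} [LinearOrder α]
    (F : Finset α) (hF : F.Nonempty) :
    ∃ (n : ℕ) (x : ℕ → α), Monotone x ∧ StrictMonoOn x (Set.Iic n) ∧ x '' Set.Iic n = F := by
  have hcard := F.card_pos.2 hF
  refine ⟨F.card - 1, fun i => F.orderEmbOfFin rfl ⟨min i (F.card - 1), by omega⟩,
    fun i j hij => (F.orderEmbOfFin rfl).monotone (by simp [Fin.le_def]; omega),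
    fun i hi j hj hij => (F.orderEmbOfFin rfl).strictMono (by simp_all [Fin.lt_def]), ?_⟩
  ext z
  simp only [← F.range_orderEmbOfFin rfl, Set.mem_image, Set.mem_Iic, Set.mem_range]
  constructor
  · rintro ⟨i, -, rfl⟩
    exact ⟨_, rfl⟩
  · rintro ⟨i, rfl⟩
    exact ⟨i, by omega, by congr; omega⟩

theorem eVariationOn.image_Iic_eq_ofReal_sum_dist {α E : Type*} [LinearOrder α]
    [PseudoMetricSpace E] (f : α → E) {x : ℕ → α} (hx : Monotone x) (n : ℕ) :
    eVariationOn f (x '' Iic n) =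
      ENNReal.ofReal (∑ i ∈ Finset.range n, dist (f (x i)) (f (x (i + 1)))) := by
  rw [eVariationOn.image_range_of_monotone f hx,
    ENNReal.ofReal_sum_of_nonneg fun _ _ => dist_nonneg]
  simp only [edist_dist]

theorem eVariationOn.exists_finset_lt_add {α E : Type*} [LinearOrder α] [PseudoEMetricSpace E]
    (f : α → E) {s : Set α} (hf : eVariationOn f s ≠ ⊤) {ε : ENNReal} (hε : ε ≠ 0) :
    ∃ T : Finset α, ↑T ⊆ s ∧ eVariationOn f s < eVariationOn f T + ε := by
  rcases lt_or_ge (eVariationOn f s) ε with h | h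
  · exact ⟨∅, by simp, by simpa using h⟩
  have hsub : eVariationOn f s - ε < eVariationOn f s :=
    ENNReal.sub_lt_self hf (ne_bot_of_le_ne_bot hε h) hε
  obtain ⟨⟨m, t, ht, hts⟩, hlt⟩ := lt_iSup_iff.1 hsub
  refine ⟨(Finset.Iic m).image t, by
    rw [Finset.coe_image]; exact Set.image_subset_iff.2 fun i _ => hts i, ?_⟩
  rw [← ENNReal.sub_lt_iff_lt_right (ne_top_of_le_ne_top hf h) h]
  refine hlt.trans_le ?_
  simp only [Finset.coe_image, Finset.coe_Iic, eVariationOn.image_range_of_monotone f ht,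
    edist_comm, le_refl]

theorem exists_finset_subset_Icc_forall_exists_mem_Ioo {a b : ℝ} (hab : a ≤ b) {δ : ℝ}
    (hδ : 0 < δ) : ∃ G : Finset ℝ, ↑G ⊆ Icc a b ∧ ∀ y ∈ Ico a b, ∃ z ∈ G, z ∈ Ioo y (y + δ) := by
  set h := δ / 2
  have hh : 0 < h := half_pos hδ
  have hhδ : h < δ := half_lt_self hδ
  refine ⟨(Finset.range (⌈(b - a) / h⌉₊ + 1)).image fun k : ℕ => min b (a + k * h), ?_, ?_⟩
  · simp only [Finset.coe_image, Set.image_subset_iff]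
    intro k _
    exact ⟨le_min hab (le_add_of_nonneg_right (by positivity)), min_le_left _ _⟩
  · rintro y ⟨hay, hyb⟩
    set q := (y - a) / h
    have hq : 0 ≤ q := div_nonneg (sub_nonneg.2 hay) hh.le
    refine ⟨_, Finset.mem_image_of_mem _ (Finset.mem_range.2 (Nat.add_lt_add_right ?_ 1 :
      ⌊q⌋₊ + 1 < ⌈(b - a) / h⌉₊ + 1)), ?_, ?_⟩
    · rw [Nat.floor_lt hq]
      exact (div_lt_div_of_pos_right (by linarith) hh).trans_le (Nat.le_ceil _)
    · have := Nat.lt_floor_add_one q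
      rw [div_lt_iff₀ hh] at this
      push_cast
      exact lt_min hyb (by linarith)
    · have := Nat.floor_le hq
      rw [le_div_iff₀ hh] at this
      push_cast
      exact (min_le_right _ _).trans_lt (by linarith)

theorem Finset.exists_partition_Icc {α : Type*} [LinearOrder α] {a b : α} (hab : a < b)
    (F : Finset α) (hF : ↑F ⊆ Set.Icc a b) (ha : a ∈ F) (hb : b ∈ F) :
    ∃ (n : ℕ) (x : ℕ → α), 0 < n ∧ Monotone x ∧ StrictMonoOn x (Set.Iic n) ∧
      x '' Set.Iic n = F ∧ x 0 = a ∧ x n = b := by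
  obtain ⟨n, x, hxm, hxs, hxF⟩ := F.exists_monotone_strictMonoOn_image_Iic_eq ⟨a, ha⟩
  have hxab : ∀ i ≤ n, x i ∈ Set.Icc a b := fun i hi =>
    hF (by rw [← hxF]; exact Set.mem_image_of_mem x hi)
  obtain ⟨j, -, hxj⟩ : a ∈ x '' Set.Iic n := hxF ▸ ha
  obtain ⟨k, hk, hxk⟩ : b ∈ x '' Set.Iic n := hxF ▸ hb
  have hx0 : x 0 = a := le_antisymm (hxj ▸ hxm j.zero_le) (hxab 0 n.zero_le).1
  have hxn : x n = b := le_antisymm (hxab n le_rfl).2 (hxk ▸ hxm hk)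
  exact ⟨n, x, Nat.pos_of_ne_zero fun h => hab.ne (by rw [← hx0, ← hxn, h]), hxm, hxs, hxF,
    hx0, hxn⟩

theorem exists_partition_Icc_mesh_lt_of_eVariationOn_eq {E : Type*} [PseudoMetricSpace E]
    {u : ℝ → E} {a b : ℝ} (hab : a < b) {V : ℝ} (hV0 : 0 ≤ V)
    (hV : eVariationOn u (Icc a b) = ENNReal.ofReal V) {δ ε : ℝ} (hδ : 0 < δ) (hε : 0 < ε) :
    ∃ (n : ℕ) (x : ℕ → ℝ), 0 < n ∧ x 0 = a ∧ x n = b ∧ Monotone x ∧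
      (∀ i < n, x i < x (i + 1) ∧ x (i + 1) < x i + δ) ∧
      V - ε < ∑ i ∈ Finset.range n, dist (u (x i)) (u (x (i + 1))) ∧
      ∑ i ∈ Finset.range n, dist (u (x i)) (u (x (i + 1))) ≤ V := by
  obtain ⟨T, hT, hVT⟩ := eVariationOn.exists_finset_lt_add u (hV ▸ ENNReal.ofReal_ne_top)
    (ENNReal.ofReal_pos.2 hε).ne'
  obtain ⟨G, hG, hGdense⟩ := exists_finset_subset_Icc_forall_exists_mem_Ioo hab.le hδ
  set F := {a, b} ∪ T ∪ G
  have hFab : ↑F ⊆ Icc a b := by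
    simp only [F, Finset.coe_union, Finset.coe_insert, Finset.coe_singleton, union_subset_iff]
    exact ⟨⟨insert_subset_iff.2 ⟨left_mem_Icc.2 hab.le, by simpa using hab.le⟩, hT⟩, hG⟩
  obtain ⟨n, x, hn, hxm, hxs, hxF, hx0, hxn⟩ :=
    F.exists_partition_Icc hab hFab (by simp [F]) (by simp [F])
  have hstep : ∀ i < n, x i < x (i + 1) := fun i hi =>
    hxs (mem_Iic.2 hi.le) (mem_Iic.2 hi) (lt_add_one i)
  refine ⟨n, x, hn, hx0, hxn, hxm, fun i hi => ⟨hstep i hi, ?_⟩, ?_⟩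
  · have hxi : x i ∈ Ico a b :=
      ⟨hx0 ▸ hxm i.zero_le, hxn ▸ hxs (mem_Iic.2 hi.le) (mem_Iic.2 le_rfl) hi⟩
    obtain ⟨z, hzG, hz⟩ := hGdense (x i) hxi
    obtain ⟨j, -, rfl⟩ : z ∈ x '' Set.Iic n := hxF ▸ by simp [F, hzG]
    exact (hxm (hxm.reflect_lt hz.1)).trans_lt hz.2
  have hS := eVariationOn.image_Iic_eq_ofReal_sum_dist u hxm n
  rw [hxF] at hS
  constructor
  · rw [sub_lt_iff_lt_add, ← ENNReal.ofReal_lt_ofReal_iff (by positivity)]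
    calc ENNReal.ofReal V < eVariationOn u T + ENNReal.ofReal ε := hV ▸ hVT
      _ ≤ eVariationOn u F + ENNReal.ofReal ε := by
        gcongr
        exact eVariationOn.mono u fun z hz => by simp [F, hz]
      _ = ENNReal.ofReal (∑ i ∈ Finset.range n, dist (u (x i)) (u (x (i + 1))) + ε) := by
        rw [hS, ENNReal.ofReal_add (Finset.sum_nonneg fun _ _ => dist_nonneg) hε.le]
  · rw [← ENNReal.ofReal_le_ofReal_iff hV0, ← hS, ← hV]
    exact eVariationOn.mono u hFab

theorem exists_partition_Icc_dist_lt_of_eVariationOn_eq {E : Type*} [PseudoMetricSpace E]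
    {u : ℝ → E} {a b : ℝ} (hab : a < b) (hu : ContinuousOn u (Icc a b)) {V : ℝ}
    (hV0 : 0 ≤ V) (hV : eVariationOn u (Icc a b) = ENNReal.ofReal V) {η ε : ℝ} (hη : 0 < η)
    (hε : 0 < ε) :
    ∃ (n : ℕ) (x : ℕ → ℝ), 0 < n ∧ x 0 = a ∧ x n = b ∧ (∀ i < n, x i < x (i + 1)) ∧
      (∀ i < n, ∀ y ∈ Icc (x i) (x (i + 1)),
        dist (u (x i)) (u y) < η ∧ dist (u (x (i + 1))) (u y) < η) ∧
      V - ε < ∑ i ∈ Finset.range n, dist (u (x i)) (u (x (i + 1))) ∧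
      ∑ i ∈ Finset.range n, dist (u (x i)) (u (x (i + 1))) ≤ V := by
  obtain ⟨δ, hδ, huδ⟩ :=
    Metric.uniformContinuousOn_iff.1 (isCompact_Icc.uniformContinuousOn_of_continuous hu) η hη
  obtain ⟨n, x, hn, hx0, hxn, hxm, hxδ, hSV⟩ :=
    exists_partition_Icc_mesh_lt_of_eVariationOn_eq hab hV0 hV hδ hε
  refine ⟨n, x, hn, hx0, hxn, fun i hi => (hxδ i hi).1, fun i hi y hy => ?_, hSV⟩
  have hcell : Icc (x i) (x (i + 1)) ⊆ Icc a b :=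
    Icc_subset_Icc (hx0 ▸ hxm i.zero_le) (hxn ▸ hxm hi)
  have hclose : ∀ z ∈ Icc (x i) (x (i + 1)), dist (u z) (u y) < η := fun z hz =>
    huδ z (hcell hz) y (hcell hy)
      ((Real.dist_le_of_mem_Icc hz hy).trans_lt (by linarith [(hxδ i hi).2]))
  exact ⟨hclose _ (left_mem_Icc.2 (hxδ i hi).1.le), hclose _ (right_mem_Icc.2 (hxδ i hi).1.le)⟩

theorem exists_piecewise_constant_of_partition (u : ℝ → ℝ) {n : ℕ} (hn : 0 < n) {x : ℕ → ℝ}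
    (hx : ∀ i < n, x i < x (i + 1)) {ε : ℝ}
    (hosc : ∀ i < n, ∀ y ∈ Icc (x i) (x (i + 1)), |u (x i) - u y| < ε ∧ |u (x (i + 1)) - u y| < ε) :
    ∃ x' c : ℕ → ℝ, x' 0 = x 0 ∧ x' (n + 1) = x n ∧ (∀ i < n + 1, x' i < x' (i + 1)) ∧
      c 1 = u (x 0) ∧ c (n + 1) = u (x n) ∧
      (∀ i, 1 ≤ i → i < n + 1 → ∀ y ∈ Ico (x' (i - 1)) (x' i), |c i - u y| < ε) ∧
      (∀ y ∈ Icc (x' n) (x n), |c (n + 1) - u y| < ε) ∧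
      ∀ i < n, c (i + 2) - c (i + 1) = u (x (i + 1)) - u (x i) := by
  have hn1 : n - 1 + 1 = n := Nat.sub_add_cancel hn
  set mid := (x (n - 1) + x n) / 2
  have hlast := hn1 ▸ hx (n - 1) (Nat.sub_lt hn one_pos)
  have hmid : x (n - 1) < mid ∧ mid < x n :=
    ⟨left_lt_add_div_two.2 hlast, add_div_two_lt_right.2 hlast⟩
  set x' : ℕ → ℝ := fun i => if i < n then x i else if i = n then mid else x n
  have hx'_lt : ∀ i < n, x' i = x i := fun i hi => if_pos hi
  have hx'_n : x' n = mid := by simp [x']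
  have hx'_succ : x' (n + 1) = x n := by simp [x']
  have hx'_le : ∀ i < n, x' (i + 1) ≤ x (i + 1) := fun i hi => by
    rcases (show i + 1 ≤ n from hi).lt_or_eq with h | h
    · exact (hx'_lt _ h).le
    · rw [h, hx'_n]; exact hmid.2.le
  refine ⟨x', fun i => u (x (i - 1)), hx'_lt 0 hn, hx'_succ, fun i hi => ?_, by simp, by simp,
    fun i h1 hi y hy => ?_, fun y hy => ?_, fun i hi => by simp⟩
  · rcases lt_trichotomy (i + 1) n with h | h | h
    · rw [hx'_lt i (by omega), hx'_lt (i + 1) h]; exact hx i (by omega)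
    · rw [hx'_lt i (by omega), h, hx'_n, show i = n - 1 by omega]; exact hmid.1
    · obtain rfl : i = n := by omega
      rw [hx'_n, hx'_succ]; exact hmid.2
  · obtain ⟨j, rfl⟩ := Nat.exists_eq_add_of_le' h1
    simp only [Nat.add_sub_cancel] at hy ⊢
    rw [hx'_lt j (by omega)] at hy
    exact (hosc j (by omega) y ⟨hy.1, hy.2.le.trans (hx'_le j (by omega))⟩).1
  · rw [hx'_n] at hy
    have := (hosc (n - 1) (by omega) y (hn1.symm ▸ ⟨hmid.1.le.trans hy.1, hy.2⟩)).2
    rwa [hn1] at this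

theorem piecewise_constant_approx_general (K : ℝ → ℝ)
    (hK0 : K 0 = 0)
    (hK3 : Filter.Tendsto (fun ρ => K ρ / ρ) (nhdsWithin 0 (Set.Ioi 0)) (nhds 1))
    (a b : ℝ) (hab : a < b) (u : ℝ → ℝ) (hu : ContinuousOn u (Set.Icc a b))
    (V : ℝ) (hV0 : 0 ≤ V)
    (hV : eVariationOn u (Set.Icc a b) = ENNReal.ofReal V) :
    ∀ ε > (0 : ℝ), ∃ (n : ℕ) (x c : ℕ → ℝ), 1 ≤ n ∧
      x 0 = a ∧ x n = b ∧ (∀ i < n, x i < x (i + 1)) ∧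
      c 1 = u a ∧ c n = u b ∧
      (∀ i, 1 ≤ i → i < n → ∀ y ∈ Set.Ico (x (i - 1)) (x i), |c i - u y| < ε) ∧
      (∀ y ∈ Set.Icc (x (n - 1)) b, |c n - u y| < ε) ∧
      |(∑ i ∈ Finset.Ico 1 n, K |c (i + 1) - c i|) - V| < ε := by
  intro ε hε
  set θ := ε / (2 * (V + 1))
  obtain ⟨r, hr, hK⟩ := exists_pos_abs_sub_le_mul_of_tendsto_div hK0 hK3 (by positivity : 0 < θ)
  obtain ⟨n, x, hn, hx0, hxn, hx, hosc, hSV, hSle⟩ :=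
    exists_partition_Icc_dist_lt_of_eVariationOn_eq hab hu hV0 hV (lt_min hε hr) (half_pos hε)
  simp only [Real.dist_eq, lt_min_iff] at hosc hSV hSle
  obtain ⟨x', c, hx'0, hx'n, hx', hc1, hcn, hclose, hclose_last, hjump⟩ :=
    exists_piecewise_constant_of_partition u hn hx fun i hi y hy =>
      ⟨(hosc i hi y hy).1.1, (hosc i hi y hy).2.1⟩
  have hsum : ∑ i ∈ Finset.Ico 1 (n + 1), K |c (i + 1) - c i| =
      ∑ i ∈ Finset.range n, K |u (x i) - u (x (i + 1))| := by
    rw [Finset.range_eq_Ico, ← Finset.sum_Ico_add' _ 0 n 1]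
    refine Finset.sum_congr rfl fun i hi => ?_
    rw [hjump i (Finset.mem_Ico.1 hi).2, abs_sub_comm]
  have hKS := abs_sum_sub_sum_le_mul (Finset.range n) hK (ρ := fun i => |u (x i) - u (x (i + 1))|)
    fun i hi => ⟨abs_nonneg _,
      (hosc i (Finset.mem_range.1 hi) _ (right_mem_Icc.2 (hx i (Finset.mem_range.1 hi)).le)).1.2⟩
  have hθV : θ * V < ε / 2 := by
    rw [div_mul_eq_mul_div, div_lt_div_iff₀ (by positivity) two_pos]
    nlinarith
  have hθS := mul_le_mul_of_nonneg_left hSle (by positivity : 0 ≤ θ)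
  refine ⟨n + 1, x', c, by omega, hx0 ▸ hx'0, hxn ▸ hx'n, hx', hx0 ▸ hc1, hxn ▸ hcn, hclose,
    by simpa [hxn] using hclose_last, ?_⟩
  rw [hsum, abs_sub_lt_iff]
  rw [abs_le] at hKS
  constructor <;> linarith

/-- Approximation of a continuous function of finite total variation `V` by piecewise
constant functions (Lemma 2.3): for every `ε > 0` there is a piecewise constant
function `w` (values `cᵢ` on `[x_{i-1}, xᵢ)`, with `c₁ = u(a)`, `c_n = u(b)`) that is
uniformly `ε`-close to `u` and whose generalized total variation
`∑ K(|c_{i+1} - cᵢ|)` is `ε`-close to `V`. -/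
theorem piecewise_constant_approx (K : ℝ → ℝ)
    (hKnn : ∀ ρ, 0 ≤ ρ → 0 ≤ K ρ) (hK0 : K 0 = 0)
    (hK3 : Filter.Tendsto (fun ρ => K ρ / ρ) (nhdsWithin 0 (Set.Ioi 0)) (nhds 1))
    (a b : ℝ) (hab : a < b) (u : ℝ → ℝ) (hu : ContinuousOn u (Set.Icc a b))
    (V : ℝ) (hV0 : 0 ≤ V)
    (hV : eVariationOn u (Set.Icc a b) = ENNReal.ofReal V) :
    ∀ ε > (0 : ℝ), ∃ (n : ℕ) (x c : ℕ → ℝ), 1 ≤ n ∧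
      x 0 = a ∧ x n = b ∧ (∀ i < n, x i < x (i + 1)) ∧
      c 1 = u a ∧ c n = u b ∧
      (∀ i, 1 ≤ i → i < n → ∀ y ∈ Set.Ico (x (i - 1)) (x i), |c i - u y| < ε) ∧
      (∀ y ∈ Set.Icc (x (n - 1)) b, |c n - u y| < ε) ∧
      |(∑ i ∈ Finset.Ico 1 n, K |c (i + 1) - c i|) - V| < ε :=
  piecewise_constant_approx_general K hK0 hK3 a b hab u hu V hV0 hV
end

section
/- Let K:[0,∞)→[0,∞) satisfy K(0)=0 and lim_{ρ→0+} K(ρ)/ρ = 1. Let a<b and let u:[a,b]→ℝ be continuous and non-decreasing. Then for every ε>0 there exist an integer n ≥ 1, points a = x₀ < x₁ < ⋯ < x_n = b and values c₁ ≤ c₂ ≤ ⋯ ≤ c_n with c₁ = u(a) and c_n = u(b), such that the piecewise constant function w defined by w = c_i on [x_{i−1},x_i) for i < n and w = c_n on [x_{n−1},b] satisfies sup_{[a,b]} |w − u| < ε and |∑_{i=1}^{n−1} K(c_{i+1} − c_i) − (u(b) − u(a))| < ε. -/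
/-!
Sample `u` on a uniform grid of mesh `h = (b - a) / n`: take `c i = u (x (i - 1))`, the value at the
left end of the `i`-th cell, except `c n = u b`. By uniform continuity of `u`, for `n` large every
value `c i` is uniformly close to `u` on its cell, and every jump `c (i + 1) - c i` is a small
non-negative number (monotonicity of `u`). The jumps telescope to `u b - u a`, and since
`K ρ = ρ + o(ρ)` as `ρ → 0+`, replacing each small jump `ρ` by `K ρ` changes the sum by at most
`η (u b - u a)` for any prescribed `η > 0`.
-/

open Set Filter Topology

noncomputable def gridPoint (a b : ℝ) (n i : ℕ) : ℝ := a + i * ((b - a) / n)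

section Grid

variable {a b : ℝ} {n i : ℕ}

@[simp]
lemma gridPoint_zero : gridPoint a b n 0 = a := by
  simp [gridPoint]

lemma gridPoint_self (hn : n ≠ 0) : gridPoint a b n n = b := by
  have : (n : ℝ) ≠ 0 := Nat.cast_ne_zero.2 hn
  simp only [gridPoint]
  field_simp
  ring

lemma gridPoint_succ (i : ℕ) : gridPoint a b n (i + 1) = gridPoint a b n i + (b - a) / n := by
  simp only [gridPoint]
  push_cast
  ring

lemma gridPoint_strictMono (hab : a < b) (hn : n ≠ 0) : StrictMono (gridPoint a b n) := by
  have : 0 < (b - a) / n := div_pos (sub_pos.2 hab) (by positivity)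
  intro i j hij
  unfold gridPoint
  gcongr

lemma gridPoint_mem_Icc (hab : a < b) (hi : i ≤ n) : gridPoint a b n i ∈ Icc a b := by
  rcases Nat.eq_zero_or_pos n with rfl | hn
  · simp [Nat.le_zero.1 hi, hab.le]
  have hmono := (gridPoint_strictMono hab hn.ne').monotone
  exact ⟨by simpa using hmono (Nat.zero_le i), by simpa [gridPoint_self hn.ne'] using hmono hi⟩

/-- The point at which the `i`-th value of the step function is sampled: the left end of the cell
`[x (i - 1), x i)`, except that the last cell is sampled at `b`. -/
noncomputable def samplePoint (a b : ℝ) (n i : ℕ) : ℝ :=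
  if i = n then b else gridPoint a b n (i - 1)

lemma samplePoint_one (hn : 2 ≤ n) : samplePoint a b n 1 = a := by
  simp [samplePoint, show 1 ≠ n by omega]

@[simp]
lemma samplePoint_self : samplePoint a b n n = b := by
  simp [samplePoint]

lemma samplePoint_of_lt (hi : i < n) : samplePoint a b n i = gridPoint a b n (i - 1) := by
  simp [samplePoint, hi.ne]

lemma samplePoint_mem_Icc (hab : a < b) (hi : i ≤ n) : samplePoint a b n i ∈ Icc a b := by
  rcases hi.lt_or_eq with hi | rfl
  · exact samplePoint_of_lt hi ▸ gridPoint_mem_Icc hab (by omega)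
  · simpa using hab.le

lemma samplePoint_le_succ (hab : a < b) (hi : i < n) :
    samplePoint a b n i ≤ samplePoint a b n (i + 1) := by
  rw [samplePoint_of_lt hi]
  rcases (Nat.succ_le_of_lt hi).lt_or_eq with hi' | hi'
  · rw [samplePoint_of_lt hi']
    exact (gridPoint_strictMono hab (by omega)).monotone (by omega)
  · rw [← Nat.succ_eq_add_one, hi', samplePoint_self]
    exact (gridPoint_mem_Icc hab (by omega)).2

lemma samplePoint_succ_sub_le (hab : a < b) (hi₁ : 1 ≤ i) (hi : i < n) :
    samplePoint a b n (i + 1) - samplePoint a b n i ≤ 2 * ((b - a) / n) := by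
  have hh : 0 ≤ (b - a) / n := div_nonneg (sub_nonneg.2 hab.le) n.cast_nonneg
  obtain ⟨k, rfl⟩ : ∃ k, i = k + 1 := ⟨i - 1, by omega⟩
  rw [samplePoint_of_lt hi, Nat.add_sub_cancel]
  rcases (show k + 1 + 1 ≤ n by omega).lt_or_eq with hi' | rfl
  · rw [samplePoint_of_lt hi', Nat.add_sub_cancel, gridPoint_succ]
    linarith
  · have hb := gridPoint_self (a := a) (b := b) (n := k + 1 + 1) (by omega)
    rw [gridPoint_succ, gridPoint_succ] at hb
    rw [samplePoint_self]
    linarith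

lemma abs_samplePoint_sub_le_of_mem_Ico (hi₁ : 1 ≤ i) (hi : i < n) {y : ℝ}
    (hy : y ∈ Ico (gridPoint a b n (i - 1)) (gridPoint a b n i)) :
    |samplePoint a b n i - y| ≤ (b - a) / n := by
  have hcell := gridPoint_succ (a := a) (b := b) (n := n) (i - 1)
  rw [Nat.sub_add_cancel hi₁] at hcell
  rw [samplePoint_of_lt hi, abs_sub_comm, abs_of_nonneg (by linarith [hy.1])]
  linarith [hy.2]

lemma abs_samplePoint_self_sub_le_of_mem_Icc (hn : n ≠ 0) {y : ℝ}
    (hy : y ∈ Icc (gridPoint a b n (n - 1)) b) :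
    |samplePoint a b n n - y| ≤ (b - a) / n := by
  have hcell := gridPoint_succ (a := a) (b := b) (n := n) (n - 1)
  rw [Nat.sub_add_cancel (Nat.one_le_iff_ne_zero.2 hn), gridPoint_self hn] at hcell
  rw [samplePoint_self, abs_of_nonneg (by linarith [hy.2])]
  linarith [hy.1]

end Grid

section StepApprox

variable {u : ℝ → ℝ} {a b η : ℝ}

lemma exists_two_le_forall_abs_sub_lt (hu : ContinuousOn u (Icc a b)) (hη : 0 < η) :
    ∃ n : ℕ, 2 ≤ n ∧
      ∀ p ∈ Icc a b, ∀ q ∈ Icc a b, |p - q| ≤ 2 * ((b - a) / n) → |u p - u q| < η := by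
  obtain ⟨δ, hδ, huδ⟩ := Metric.uniformContinuousOn_iff.1
    (isCompact_Icc.uniformContinuousOn_of_continuous hu) η hη
  have hmesh : Tendsto (fun n : ℕ => 2 * ((b - a) / n)) atTop (𝓝 0) := by
    simpa using (tendsto_const_div_atTop_nhds_zero_nat (b - a)).const_mul 2
  obtain ⟨n, hn, hnδ⟩ := ((eventually_ge_atTop 2).and (hmesh.eventually (gt_mem_nhds hδ))).exists
  exact ⟨n, hn, fun p hp q hq hpq => huδ p hp q hq (hpq.trans_lt hnδ)⟩

theorem exists_monotone_step_approx (hab : a < b) (hu : ContinuousOn u (Icc a b))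
    (hum : MonotoneOn u (Icc a b)) (hη : 0 < η) :
    ∃ (n : ℕ) (x c : ℕ → ℝ), 2 ≤ n ∧ x 0 = a ∧ x n = b ∧ (∀ i < n, x i < x (i + 1)) ∧
      c 1 = u a ∧ c n = u b ∧
      (∀ i, 1 ≤ i → i < n → 0 ≤ c (i + 1) - c i ∧ c (i + 1) - c i < η) ∧
      (∀ i, 1 ≤ i → i < n → ∀ y ∈ Ico (x (i - 1)) (x i), |c i - u y| < η) ∧
      (∀ y ∈ Icc (x (n - 1)) b, |c n - u y| < η) := by
  obtain ⟨n, hn, hmod⟩ := exists_two_le_forall_abs_sub_lt hu hη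
  have hh : 0 ≤ (b - a) / n := div_nonneg (sub_nonneg.2 hab.le) n.cast_nonneg
  have hmem : ∀ i ≤ n, samplePoint a b n i ∈ Icc a b := fun i hi => samplePoint_mem_Icc hab hi
  have hcell : ∀ i ≤ n, ∀ y ∈ Icc (gridPoint a b n (i - 1)) (gridPoint a b n i),
      y ∈ Icc a b := fun i hi y hy =>
    ⟨(gridPoint_mem_Icc hab (by omega)).1.trans hy.1, hy.2.trans (gridPoint_mem_Icc hab hi).2⟩
  refine ⟨n, gridPoint a b n, fun i => u (samplePoint a b n i), hn, gridPoint_zero,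
    gridPoint_self (by omega), fun i _ => gridPoint_strictMono hab (by omega) i.lt_succ_self,
    by simp [samplePoint_one hn], by simp, fun i hi₁ hi => ⟨?_, ?_⟩,
    fun i hi₁ hi y hy => ?_, fun y hy => ?_⟩
  · exact sub_nonneg.2 (hum (hmem i hi.le) (hmem (i + 1) hi) (samplePoint_le_succ hab hi))
  · refine (le_abs_self _).trans_lt (hmod _ (hmem (i + 1) hi) _ (hmem i hi.le) ?_)
    rw [abs_of_nonneg (sub_nonneg.2 (samplePoint_le_succ hab hi))]
    exact samplePoint_succ_sub_le hab hi₁ hi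
  · exact hmod _ (hmem i hi.le) y (hcell i hi.le y (Ico_subset_Icc_self hy))
      ((abs_samplePoint_sub_le_of_mem_Ico hi₁ hi hy).trans (by linarith))
  · have hy' : y ∈ Icc (gridPoint a b n (n - 1)) (gridPoint a b n n) := by
      rwa [gridPoint_self (by omega)]
    exact hmod _ (hmem n le_rfl) y (hcell n le_rfl y hy')
      ((abs_samplePoint_self_sub_le_of_mem_Icc (by omega) hy).trans (by linarith))

end StepApprox

section GeneralizedVariation

variable {K : ℝ → ℝ} {δ η : ℝ}

lemma exists_abs_sub_le_mul_of_tendsto_div (hK0 : K 0 = 0)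
    (hK : Tendsto (fun ρ => K ρ / ρ) (𝓝[>] 0) (𝓝 1)) (hη : 0 < η) :
    ∃ δ > 0, ∀ ρ, 0 ≤ ρ → ρ < δ → |K ρ - ρ| ≤ η * ρ := by
  obtain ⟨δ, hδ, hKδ⟩ := Metric.tendsto_nhdsWithin_nhds.1 hK η hη
  refine ⟨δ, hδ, fun ρ hρ₀ hρδ => ?_⟩
  rcases hρ₀.eq_or_lt with rfl | hρ
  · simp [hK0]
  have hq : |K ρ / ρ - 1| < η := hKδ hρ (by simpa [Real.dist_eq, abs_of_pos hρ] using hρδ)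
  calc |K ρ - ρ| = |ρ * (K ρ / ρ - 1)| := by rw [mul_sub, mul_div_cancel₀ _ hρ.ne', mul_one]
    _ = ρ * |K ρ / ρ - 1| := by rw [abs_mul, abs_of_pos hρ]
    _ ≤ η * ρ := by nlinarith

lemma abs_sum_comp_sub_sum_le {ι : Type*} {s : Finset ι} {d : ι → ℝ}
    (hK : ∀ ρ, 0 ≤ ρ → ρ < δ → |K ρ - ρ| ≤ η * ρ) (hd : ∀ i ∈ s, 0 ≤ d i ∧ d i < δ) :
    |∑ i ∈ s, K (d i) - ∑ i ∈ s, d i| ≤ η * ∑ i ∈ s, d i := by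
  rw [← Finset.sum_sub_distrib, Finset.mul_sum]
  exact (Finset.abs_sum_le_sum_abs _ _).trans
    (Finset.sum_le_sum fun i hi => hK _ (hd i hi).1 (hd i hi).2)

end GeneralizedVariation

theorem piecewise_constant_approx_monotone_general (K : ℝ → ℝ)
    (hK0 : K 0 = 0)
    (hK3 : Filter.Tendsto (fun ρ => K ρ / ρ) (nhdsWithin 0 (Set.Ioi 0)) (nhds 1))
    (a b : ℝ) (hab : a < b) (u : ℝ → ℝ)
    (hu : ContinuousOn u (Set.Icc a b)) (hum : MonotoneOn u (Set.Icc a b)) :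
    ∀ ε > (0 : ℝ), ∃ (n : ℕ) (x c : ℕ → ℝ), 1 ≤ n ∧
      x 0 = a ∧ x n = b ∧ (∀ i < n, x i < x (i + 1)) ∧
      (∀ i, 1 ≤ i → i < n → c i ≤ c (i + 1)) ∧
      c 1 = u a ∧ c n = u b ∧
      (∀ i, 1 ≤ i → i < n → ∀ y ∈ Set.Ico (x (i - 1)) (x i), |c i - u y| < ε) ∧
      (∀ y ∈ Set.Icc (x (n - 1)) b, |c n - u y| < ε) ∧
      |(∑ i ∈ Finset.Ico 1 n, K (c (i + 1) - c i)) - (u b - u a)| < ε := by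
  intro ε hε
  set M := u b - u a
  obtain ⟨η, hη, hηM⟩ : ∃ η > 0, η * M < ε := by
    refine ⟨ε / (|M| + 1), by positivity, ?_⟩
    rw [div_mul_eq_mul_div, div_lt_iff₀ (by positivity)]
    nlinarith [le_abs_self M]
  obtain ⟨δ, hδ, hKδ⟩ := exists_abs_sub_le_mul_of_tendsto_div hK0 hK3 hη
  obtain ⟨n, x, c, hn, hx0, hxn, hx, hc1, hcn, hjump, hcell, hlast⟩ :=
    exists_monotone_step_approx hab hu hum (lt_min hε hδ)
  have htotal : ∑ i ∈ Finset.Ico 1 n, (c (i + 1) - c i) = M := by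
    rw [Finset.sum_Ico_sub _ (by omega), hcn, hc1]
  refine ⟨n, x, c, by omega, hx0, hxn, hx, fun i hi₁ hi => sub_nonneg.1 (hjump i hi₁ hi).1, hc1,
    hcn, fun i hi₁ hi y hy => (hcell i hi₁ hi y hy).trans_le (min_le_left _ _),
    fun y hy => (hlast y hy).trans_le (min_le_left _ _), ?_⟩
  calc |∑ i ∈ Finset.Ico 1 n, K (c (i + 1) - c i) - M|
      ≤ η * M := htotal ▸ abs_sum_comp_sub_sum_le hKδ fun i hi => by
        obtain ⟨hi₁, hi⟩ := Finset.mem_Ico.1 hi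
        exact ⟨(hjump i hi₁ hi).1, (hjump i hi₁ hi).2.trans_le (min_le_right _ _)⟩
    _ < ε := hηM

/-- Monotone version of the piecewise constant approximation (Corollary 2.4):
a continuous non-decreasing `u` on `[a,b]` can be approximated uniformly within `ε`
by a non-decreasing piecewise constant function `w` (values `c₁ ≤ ⋯ ≤ c_n`, with
`c₁ = u(a)` and `c_n = u(b)`) whose generalized total variation `∑ K(c_{i+1} - cᵢ)`
is `ε`-close to the total variation `u(b) - u(a)`. -/
theorem piecewise_constant_approx_monotone (K : ℝ → ℝ)
    (hKnn : ∀ ρ, 0 ≤ ρ → 0 ≤ K ρ) (hK0 : K 0 = 0)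
    (hK3 : Filter.Tendsto (fun ρ => K ρ / ρ) (nhdsWithin 0 (Set.Ioi 0)) (nhds 1))
    (a b : ℝ) (hab : a < b) (u : ℝ → ℝ)
    (hu : ContinuousOn u (Set.Icc a b)) (hum : MonotoneOn u (Set.Icc a b)) :
    ∀ ε > (0 : ℝ), ∃ (n : ℕ) (x c : ℕ → ℝ), 1 ≤ n ∧
      x 0 = a ∧ x n = b ∧ (∀ i < n, x i < x (i + 1)) ∧
      (∀ i, 1 ≤ i → i < n → c i ≤ c (i + 1)) ∧
      c 1 = u a ∧ c n = u b ∧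
      (∀ i, 1 ≤ i → i < n → ∀ y ∈ Set.Ico (x (i - 1)) (x i), |c i - u y| < ε) ∧
      (∀ y ∈ Set.Icc (x (n - 1)) b, |c n - u y| < ε) ∧
      |(∑ i ∈ Finset.Ico 1 n, K (c (i + 1) - c i)) - (u b - u a)| < ε :=
  piecewise_constant_approx_monotone_general K hK0 hK3 a b hab u hu hum
end

section
/- Let a<b, let g(x) = px + q with p > 0, let λ > 0 and K(ρ) = ρ/(1+ρ). For a non-decreasing piecewise constant function v on (a,b) with finitely many jumps of sizes ρ₁,…,ρ_n, define the energy E(v) = ∑_{i=1}^n K(ρ_i) + (λ/2)∫_a^b |v − g|² dx. Suppose U minimizes E among all non-decreasing piecewise constant functions with finitely many jumps on (a,b), and that U has jump points a < a₁ < a₂ < ⋯ < a_m < b with m ≥ 1. Then the gaps a_{i+1} − a_i (i = 1,…,m−1) are all equal, and the jump sizes U(a_i+0) − U(a_i−0) (i = 1,…,m) are all equal. -/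
/-!
If a jump point `a_i` moves while the values stay fixed, only the fidelity term changes, and
stationarity forces `g(a_i)` to be the mean of the two values adjacent to `a_i`. With every jump
point at such a mean, the fidelity term is `λ/(24p) ∑ ρ_i³` plus a term depending only on the end
values, so up to a constant the energy is `∑ ψ(ρ_i)` with `ψ(ρ) = K(ρ) + λρ³/(24p)`. Raising the
value between `a_i` and `a_{i+1}` by `η`, and moving both points so that they stay at the means,
turns it into `ψ(ρ_i + η) + ψ(ρ_{i+1} - η)`, whose first- and second-order conditions at `η = 0`
force `ρ_i = ρ_{i+1}`. Equal jumps at the means of an affine `g` are equally spaced.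
-/

open intervalIntegral

/-- The KWC-type energy `TV_{Kg}` with `K(ρ) = ρ/(1+ρ)` and data `g(x) = p x + q`, of the
piecewise constant function on `(a,b)` determined by jump points `t 1 < ⋯ < t n` and
values `c 0, …, c n` (value `c i` between `t i` and `t (i+1)`), i.e. of
`v x = c 0 + ∑_{i=1}^n [t i < x] (c i - c (i-1))`. -/
noncomputable def stepEnergyAffine (a b lam p q : ℝ) (n : ℕ) (t c : ℕ → ℝ) : ℝ :=
  (∑ i ∈ Finset.Icc 1 n, (c i - c (i - 1)) / (1 + (c i - c (i - 1)))) +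
    (lam / 2) * ∫ x in a..b,
      ((c 0 + ∑ i ∈ Finset.Icc 1 n, if t i < x then c i - c (i - 1) else 0) -
        (p * x + q)) ^ 2

open Set Filter Topology

lemma sum_Icc_sub_pred (c : ℕ → ℝ) (j : ℕ) :
    ∑ i ∈ Finset.Icc 1 j, (c i - c (i - 1)) = c j - c 0 := by
  induction j with
  | zero => simp
  | succ k ih => rw [Finset.sum_Icc_succ_top (by omega), ih]; simp

lemma step_eq_of_mem_Ioo {t : ℕ → ℝ} {n : ℕ} (hmono : ∀ i, i ≤ n → t i < t (i + 1))
    (c : ℕ → ℝ) {j : ℕ} (hj : j ≤ n) {x : ℝ} (hx : x ∈ Ioo (t j) (t (j + 1))) :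
    c 0 + ∑ i ∈ Finset.Icc 1 n, (if t i < x then c i - c (i - 1) else 0) = c j := by
  have hst : MonotoneOn t (Iic (n + 1)) :=
    (strictMonoOn_Iic_of_lt_succ fun k hk => hmono k (by omega)).monotoneOn
  have hfilter : (Finset.Icc 1 n).filter (fun i => t i < x) = Finset.Icc 1 j := by
    ext i
    simp only [Finset.mem_filter, Finset.mem_Icc]
    constructor
    · rintro ⟨⟨hi1, hin⟩, hix⟩
      refine ⟨hi1, not_lt.1 fun hji => ?_⟩
      exact (hx.2.trans_le (hst (mem_Iic.2 (by omega)) (mem_Iic.2 (by omega)) hji)).not_gt hix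
    · rintro ⟨hi1, hij⟩
      exact ⟨⟨hi1, hij.trans hj⟩,
        (hst (mem_Iic.2 (by omega)) (mem_Iic.2 (by omega)) hij).trans_lt hx.1⟩
  rw [← Finset.sum_filter, hfilter, sum_Icc_sub_pred]
  ring

lemma integral_sub_affine_sq {p : ℝ} (hp : p ≠ 0) (q c x y : ℝ) :
    ∫ z in x..y, (c - (p * z + q)) ^ 2
      = ((c - p * x - q) ^ 3 - (c - p * y - q) ^ 3) / (3 * p) := by
  have hderiv : ∀ z ∈ uIcc x y,
      HasDerivAt (fun z => -(c - p * z - q) ^ 3 / (3 * p)) ((c - (p * z + q)) ^ 2) z := by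
    intro z _
    refine (((((hasDerivAt_id' z).const_mul p).const_sub c).sub_const q).pow 3).neg
      |>.div_const (3 * p) |>.congr_deriv ?_
    field_simp
    ring
  rw [integral_eq_sub_of_hasDerivAt hderiv ((by fun_prop : Continuous _).intervalIntegrable _ _)]
  ring

theorem stepEnergyAffine_eq {a b lam p q : ℝ} (hp : p ≠ 0) {n : ℕ} {t : ℕ → ℝ}
    (ht0 : t 0 = a) (htn : t (n + 1) = b) (hmono : ∀ i, i ≤ n → t i < t (i + 1))
    (c : ℕ → ℝ) :
    stepEnergyAffine a b lam p q n t c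
      = (∑ i ∈ Finset.Icc 1 n, (c i - c (i - 1)) / (1 + (c i - c (i - 1)))) +
        lam / (6 * p) * ∑ j ∈ Finset.range (n + 1),
          ((c j - p * t j - q) ^ 3 - (c j - p * t (j + 1) - q) ^ 3) := by
  set v : ℝ → ℝ := fun x =>
    ((c 0 + ∑ i ∈ Finset.Icc 1 n, if t i < x then c i - c (i - 1) else 0) - (p * x + q)) ^ 2
  have hpiece : ∀ j, j ≤ n →
      EqOn v (fun x => (c j - (p * x + q)) ^ 2) (Ioo (t j) (t (j + 1))) :=
    fun j hj x hx => by simp only [v, step_eq_of_mem_Ioo hmono c hj hx]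
  have hint : ∀ j < n + 1, IntervalIntegrable v MeasureTheory.volume (t j) (t (j + 1)) :=
    fun j hj => (intervalIntegrable_congr_uIoo (by
      rw [uIoo_of_le (hmono j (by omega)).le]; exact hpiece j (by omega))).2
      ((by fun_prop : Continuous fun x => (c j - (p * x + q)) ^ 2).intervalIntegrable _ _)
  rw [stepEnergyAffine, ← ht0, ← htn, ← sum_integral_adjacent_intervals hint,
    Finset.mul_sum, Finset.mul_sum]
  congr 1
  refine Finset.sum_congr rfl fun j hj => ?_
  have hj : j ≤ n := Nat.lt_succ_iff.1 (Finset.mem_range.1 hj)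
  rw [integral_congr_Ioo_of_le (hmono j hj).le (hpiece j hj), integral_sub_affine_sq hp]
  field_simp
  ring

lemma sum_range_sub_eq_sub_add_sum_Icc {G : Type*} [AddCommGroup G] (u v : ℕ → G) (m : ℕ) :
    ∑ j ∈ Finset.range (m + 1), (u j - v j)
      = u 0 - v m + ∑ k ∈ Finset.Icc 1 m, (u k - v (k - 1)) := by
  induction m with
  | zero => simp
  | succ m ih =>
    rw [Finset.sum_range_succ, ih, Finset.sum_Icc_succ_top (by omega), Nat.add_sub_cancel]
    abel

noncomputable def jumpCost (κ ρ : ℝ) : ℝ := ρ / (1 + ρ) + κ * ρ ^ 3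

theorem stepEnergyAffine_eq_of_midpoint {a b lam p q : ℝ} (hp : p ≠ 0) {m : ℕ}
    {t c : ℕ → ℝ} (ht0 : t 0 = a) (htm : t (m + 1) = b)
    (hmono : ∀ i, i ≤ m → t i < t (i + 1))
    (hmid : ∀ k, 1 ≤ k → k ≤ m → 2 * (p * t k + q) = c (k - 1) + c k) :
    stepEnergyAffine a b lam p q m t c
      = (∑ k ∈ Finset.Icc 1 m, jumpCost (lam / (24 * p)) (c k - c (k - 1))) +
        lam / (6 * p) * ((c 0 - p * a - q) ^ 3 - (c m - p * b - q) ^ 3) := by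
  have hcube : ∀ k ∈ Finset.Icc 1 m,
      (c k - p * t k - q) ^ 3 - (c (k - 1) - p * t (k - 1 + 1) - q) ^ 3
        = (c k - c (k - 1)) ^ 3 / 4 := by
    intro k hk
    obtain ⟨hk1, hkm⟩ := Finset.mem_Icc.1 hk
    rw [Nat.sub_add_cancel hk1,
      show p * t k = (c (k - 1) + c k) / 2 - q by linarith [hmid k hk1 hkm]]
    ring
  rw [stepEnergyAffine_eq hp ht0 htm hmono,
    sum_range_sub_eq_sub_add_sum_Icc (fun j => (c j - p * t j - q) ^ 3)
      (fun j => (c j - p * t (j + 1) - q) ^ 3), Finset.sum_congr rfl hcube, ht0, htm]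
  simp only [jumpCost, Finset.sum_add_distrib, ← Finset.mul_sum, ← Finset.sum_div]
  field_simp
  ring

lemma update_lt_update_succ {n i : ℕ} {t : ℕ → ℝ} (hmono : ∀ k, k ≤ n → t k < t (k + 1))
    {s : ℝ} (hs₁ : t (i - 1) < s) (hs₂ : s < t (i + 1)) :
    ∀ k, k ≤ n → Function.update t i s k < Function.update t i s (k + 1) := by
  intro k hk
  rcases eq_or_ne k i with rfl | hki
  · simpa using hs₂
  rcases eq_or_ne (k + 1) i with rfl | hk1
  · simpa [hki] using hs₁
  · simpa [hki, hk1] using hmono k hk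

theorem stepEnergyAffine_update_sub {a b lam p q : ℝ} (hp : p ≠ 0) {m i : ℕ}
    {t : ℕ → ℝ} (c : ℕ → ℝ) (ht0 : t 0 = a) (htm : t (m + 1) = b)
    (hmono : ∀ k, k ≤ m → t k < t (k + 1)) (hi : 1 ≤ i) (him : i ≤ m) {s : ℝ}
    (hs₁ : t (i - 1) < s) (hs₂ : s < t (i + 1)) :
    stepEnergyAffine a b lam p q m (Function.update t i s) c - stepEnergyAffine a b lam p q m t c
      = lam / 2 * (c i - c (i - 1)) * (s - t i) * (p * (s + t i) + 2 * q - (c (i - 1) + c i)) := by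
  rw [stepEnergyAffine_eq hp (by simp [show 0 ≠ i by omega, ht0])
      (by simp [show m + 1 ≠ i by omega, htm]) (update_lt_update_succ hmono hs₁ hs₂),
    stepEnergyAffine_eq hp ht0 htm hmono, add_sub_add_left_eq_sub, ← mul_sub,
    ← Finset.sum_sub_distrib, Finset.sum_eq_add_of_mem (i - 1) i
      (Finset.mem_range.2 (by omega)) (Finset.mem_range.2 (by omega)) (by omega)]
  · simp only [Function.update_self, Function.update_of_ne (show i - 1 ≠ i by omega),
      Function.update_of_ne (show i + 1 ≠ i by omega), Nat.sub_add_cancel hi]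
    field_simp
    ring
  · rintro k - ⟨hk1, hk2⟩
    simp [hk2, show k + 1 ≠ i by omega]

theorem midpoint_of_minimizer {a b lam p q : ℝ} (hp : p ≠ 0) (hlam : lam ≠ 0) {m i : ℕ}
    {t c : ℕ → ℝ} (ht0 : t 0 = a) (htm : t (m + 1) = b)
    (hmono : ∀ k, k ≤ m → t k < t (k + 1)) (hi : 1 ≤ i) (him : i ≤ m)
    (hjump : c (i - 1) < c i)
    (hmin : ∀ t' : ℕ → ℝ, t' 0 = a → t' (m + 1) = b → (∀ k, k ≤ m → t' k < t' (k + 1)) →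
      stepEnergyAffine a b lam p q m t c ≤ stepEnergyAffine a b lam p q m t' c) :
    2 * (p * t i + q) = c (i - 1) + c i := by
  set P : ℝ → ℝ := fun s =>
    lam / 2 * (c i - c (i - 1)) * (s - t i) * (p * (s + t i) + 2 * q - (c (i - 1) + c i))
  have hprev : t (i - 1) < t i := by simpa [Nat.sub_add_cancel hi] using hmono (i - 1) (by omega)
  have hloc : IsLocalMin P (t i) := by
    filter_upwards [eventually_gt_nhds hprev, eventually_lt_nhds (hmono i him)] with s hs₁ hs₂
    simp only [P, sub_self, mul_zero, zero_mul]
    rw [← stepEnergyAffine_update_sub hp c ht0 htm hmono hi him hs₁ hs₂, sub_nonneg]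
    exact hmin _ (by simp [show 0 ≠ i by omega, ht0])
      (by simp [show m + 1 ≠ i by omega, htm]) (update_lt_update_succ hmono hs₁ hs₂)
  have hderiv : HasDerivAt P
      (lam / 2 * (c i - c (i - 1)) * (2 * (p * t i + q) - (c (i - 1) + c i))) (t i) := by
    refine (((hasDerivAt_id' (t i)).sub_const (t i)).const_mul _).mul
      ((((hasDerivAt_id' (t i)).add_const (t i)).const_mul p).add_const _ |>.sub_const _)
      |>.congr_deriv ?_
    ring
  have hzero := hloc.hasDerivAt_eq_zero hderiv
  have hρ : c i - c (i - 1) ≠ 0 := sub_ne_zero.2 hjump.ne'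
  simpa [hlam, hρ, sub_eq_zero] using hzero

theorem IsLocalMin.nonneg_of_hasDerivAt_of_hasDerivAt {f f' : ℝ → ℝ} {x s : ℝ}
    (h : IsLocalMin f x) (hf : ∀ᶠ y in 𝓝 x, HasDerivAt f (f' y) y) (hf' : HasDerivAt f' s x) :
    0 ≤ s := by
  have hderiv : deriv f =ᶠ[𝓝 x] f' := hf.mono fun y hy => hy.deriv
  have hs : deriv (deriv f) x = s := (hf'.congr_of_eventuallyEq hderiv).deriv
  by_contra! hneg
  have hmax : IsLocalMax f x :=
    isLocalMax_of_deriv_deriv_neg (hs ▸ hneg) h.deriv_eq_zero hf.self_of_nhds.continuousAt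
  have hconst : f =ᶠ[𝓝 x] fun _ => f x := (h.and hmax).mono fun y hy => le_antisymm hy.2 hy.1
  have : deriv (deriv f) x = 0 := by
    rw [hconst.deriv.deriv_eq]
    simp
  linarith

theorem IsLocalMin.optimality_of_transfer {φ φ' φ'' : ℝ → ℝ} {r₁ r₂ : ℝ}
    (hφ₁ : ∀ᶠ r in 𝓝 r₁, HasDerivAt φ (φ' r) r) (hφ₂ : ∀ᶠ r in 𝓝 r₂, HasDerivAt φ (φ' r) r)
    (hφ'₁ : HasDerivAt φ' (φ'' r₁) r₁) (hφ'₂ : HasDerivAt φ' (φ'' r₂) r₂)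
    (hmin : IsLocalMin (fun η => φ (r₁ + η) + φ (r₂ - η)) 0) :
    φ' r₁ = φ' r₂ ∧ 0 ≤ φ'' r₁ + φ'' r₂ := by
  have hshift : ∀ {r : ℝ} {P : ℝ → Prop}, (∀ᶠ y in 𝓝 r, P y) →
      (∀ᶠ η in 𝓝 0, P (r + η)) ∧ ∀ᶠ η in 𝓝 0, P (r - η) := fun h =>
    ⟨(Continuous.tendsto' (by fun_prop) 0 _ (add_zero _)).eventually h,
      (Continuous.tendsto' (by fun_prop) 0 _ (sub_zero _)).eventually h⟩
  have hderiv : ∀ᶠ η in 𝓝 0, HasDerivAt (fun η => φ (r₁ + η) + φ (r₂ - η))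
      (φ' (r₁ + η) - φ' (r₂ - η)) η := by
    filter_upwards [(hshift hφ₁).1, (hshift hφ₂).2] with η h₁ h₂
    exact ((h₁.comp_const_add r₁ η).fun_add (h₂.comp_const_sub r₂ η)).congr_deriv
      (sub_eq_add_neg _ _).symm
  have hderiv' : HasDerivAt (fun η => φ' (r₁ + η) - φ' (r₂ - η)) (φ'' r₁ + φ'' r₂) 0 :=
    ((HasDerivAt.comp_const_add r₁ 0 (by rwa [add_zero])).fun_sub
      (HasDerivAt.comp_const_sub r₂ 0 (by rwa [sub_zero]))).congr_deriv (sub_neg_eq_add _ _)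
  refine ⟨?_, hmin.nonneg_of_hasDerivAt_of_hasDerivAt hderiv hderiv'⟩
  simpa [sub_eq_zero] using hmin.hasDerivAt_eq_zero hderiv.self_of_nhds

theorem eq_of_isLocalMin_jumpCost_transfer {κ r₁ r₂ : ℝ} (h₁ : 0 < 1 + r₁) (h₂ : 0 < 1 + r₂)
    (hmin : IsLocalMin (fun η => jumpCost κ (r₁ + η) + jumpCost κ (r₂ - η)) 0) : r₁ = r₂ := by
  have hderiv : ∀ r, 0 < 1 + r →
      HasDerivAt (jumpCost κ) (1 / (1 + r) ^ 2 + κ * (3 * r ^ 2)) r := fun r hr => by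
    refine ((hasDerivAt_id' r).div ((hasDerivAt_id' r).const_add 1) hr.ne').add
      (((hasDerivAt_id' r).pow 3).const_mul κ) |>.congr_deriv ?_
    field_simp
    ring
  have hderiv2 : ∀ r, 0 < 1 + r →
      HasDerivAt (fun r => 1 / (1 + r) ^ 2 + κ * (3 * r ^ 2))
        (-2 / (1 + r) ^ 3 + κ * (6 * r)) r := fun r hr => by
    refine ((hasDerivAt_const r (1 : ℝ)).div (((hasDerivAt_id' r).const_add 1).fun_pow 2)
      (by positivity)).add ((((hasDerivAt_id' r).pow 2).const_mul 3).const_mul κ)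
      |>.congr_deriv ?_
    field_simp
    ring
  have hnear : ∀ r : ℝ, 0 < 1 + r → ∀ᶠ y in 𝓝 r, 0 < 1 + y := fun r hr =>
    (eventually_gt_nhds (by linarith : -1 < r)).mono fun y hy => by linarith
  obtain ⟨hfirst, hsecond⟩ :=
    IsLocalMin.optimality_of_transfer (φ'' := fun r => -2 / (1 + r) ^ 3 + κ * (6 * r))
      ((hnear r₁ h₁).mono fun y hy => hderiv y hy) ((hnear r₂ h₂).mono fun y hy => hderiv y hy)
      (hderiv2 r₁ h₁) (hderiv2 r₂ h₂) hmin
  by_contra hne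
  have hfirst' : (1 + r₁) + (1 + r₂) = 3 * κ * (r₁ + r₂) * (1 + r₁) ^ 2 * (1 + r₂) ^ 2 := by
    refine mul_left_cancel₀ (sub_ne_zero.2 (Ne.symm hne)) ?_
    field_simp at hfirst
    linear_combination hfirst
  have hsecond' : 0 ≤ -2 * (1 + r₂) ^ 3 - 2 * (1 + r₁) ^ 3
      + 6 * κ * (r₁ + r₂) * (1 + r₁) ^ 3 * (1 + r₂) ^ 3 := by
    have := mul_nonneg hsecond (by positivity : (0 : ℝ) ≤ (1 + r₁) ^ 3 * (1 + r₂) ^ 3)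
    field_simp at this
    linarith
  nlinarith [sq_pos_of_ne_zero (sub_ne_zero.2 hne), mul_pos h₁ h₂]

lemma eventually_add_mul_lt_add_mul {m : ℕ} {t : ℕ → ℝ} (hmono : ∀ k, k ≤ m → t k < t (k + 1))
    (e : ℕ → ℝ) :
    ∀ᶠ η in 𝓝 (0 : ℝ), ∀ k, k ≤ m → t k + η * e k < t (k + 1) + η * e (k + 1) :=
  (Set.finite_Iic m).eventually_all.2 fun k hk =>
    (by fun_prop : Continuous fun η : ℝ => t k + η * e k).continuousAt.eventually_lt
      (by fun_prop : Continuous fun η : ℝ => t (k + 1) + η * e (k + 1)).continuousAt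
      (by simpa using hmono k hk)

lemma sum_Icc_add_mul_single_sub {m i : ℕ} (hi : 1 ≤ i) (him : i < m) (f : ℝ → ℝ)
    (c : ℕ → ℝ) (η : ℝ) :
    ∑ k ∈ Finset.Icc 1 m,
        f (c k + η * (Pi.single i 1 : ℕ → ℝ) k
          - (c (k - 1) + η * (Pi.single i 1 : ℕ → ℝ) (k - 1)))
      - ∑ k ∈ Finset.Icc 1 m, f (c k - c (k - 1))
      = (f (c i - c (i - 1) + η) - f (c i - c (i - 1)))
        + (f (c (i + 1) - c i - η) - f (c (i + 1) - c i)) := by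
  rw [← Finset.sum_sub_distrib, Finset.sum_eq_add_of_mem i (i + 1)
      (Finset.mem_Icc.2 ⟨hi, him.le⟩) (Finset.mem_Icc.2 ⟨by omega, him⟩) (by omega)]
  · simp only [Pi.single_eq_same, Pi.single_eq_of_ne (show i - 1 ≠ i by omega),
      Pi.single_eq_of_ne (show i + 1 ≠ i by omega), Nat.add_sub_cancel, mul_one, mul_zero, add_zero]
    ring_nf
  · rintro k - ⟨hk1, hk2⟩
    simp [hk1, show k - 1 ≠ i by omega]

theorem jump_eq_jump_succ_of_minimizer {a b lam p q : ℝ} (hp : 0 < p) {m i : ℕ}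
    {t c : ℕ → ℝ} (ht0 : t 0 = a) (htm : t (m + 1) = b)
    (hmono : ∀ k, k ≤ m → t k < t (k + 1)) (hjump : ∀ k, 1 ≤ k → k ≤ m → c (k - 1) < c k)
    (hmid : ∀ k, 1 ≤ k → k ≤ m → 2 * (p * t k + q) = c (k - 1) + c k)
    (hi : 1 ≤ i) (him : i < m)
    (hmin : ∀ t' c' : ℕ → ℝ, t' 0 = a → t' (m + 1) = b → (∀ k, k ≤ m → t' k < t' (k + 1)) →
      (∀ k, 1 ≤ k → k ≤ m → c' (k - 1) ≤ c' k) →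
      stepEnergyAffine a b lam p q m t c ≤ stepEnergyAffine a b lam p q m t' c') :
    c i - c (i - 1) = c (i + 1) - c i := by
  have hρ₁ : 0 < c i - c (i - 1) := sub_pos.2 (hjump i hi him.le)
  have hρ₂ : 0 < c (i + 1) - c i := by simpa using sub_pos.2 (hjump (i + 1) (by omega) him)
  have hcmono : ∀ k, k ≤ m - 1 → c k < c (k + 1) := fun k hk => by
    simpa using hjump (k + 1) (by omega) (by omega)
  -- the jump points follow the means: `2 p e k` is the change of `c (k - 1) + c k` per unit `η`
  set d : ℕ → ℝ := Pi.single i 1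
  set e : ℕ → ℝ := fun k => (d (k - 1) + d k) / (2 * p)
  refine eq_of_isLocalMin_jumpCost_transfer (κ := lam / (24 * p)) (by linarith) (by linarith) ?_
  filter_upwards [eventually_add_mul_lt_add_mul hmono e, eventually_add_mul_lt_add_mul hcmono d]
    with η ht' hc'
  have hd : ∀ k, k ≠ i → d k = 0 := fun k hk => Pi.single_eq_of_ne hk 1
  have ht'0 : t 0 + η * e 0 = a := by simp only [e, hd 0 (by omega), ht0]; ring
  have ht'm : t (m + 1) + η * e (m + 1) = b := by
    simp only [e, Nat.add_sub_cancel, hd m (by omega), hd (m + 1) (by omega), htm]; ring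
  have hle := hmin _ (fun k => c k + η * d k) ht'0 ht'm ht'
    (fun k hk hkm => by simpa [Nat.sub_add_cancel hk] using (hc' (k - 1) (by omega)).le)
  rw [stepEnergyAffine_eq_of_midpoint hp.ne' ht0 htm hmono hmid,
    stepEnergyAffine_eq_of_midpoint hp.ne' ht'0 ht'm ht'
      (fun k hk hkm => by simp only [e]; field_simp; linarith [hmid k hk hkm]),
    hd 0 (by omega), hd m (by omega), mul_zero, add_zero, add_zero] at hle
  have hsum := sum_Icc_add_mul_single_sub hi him (jumpCost (lam / (24 * p))) c η
  rw [add_zero, sub_zero]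
  linarith

lemma eq_of_forall_eq_succ {α : Type*} {d : ℕ → α} {m : ℕ}
    (h : ∀ i, 1 ≤ i → i < m → d i = d (i + 1)) : ∀ i, 1 ≤ i → i ≤ m → d i = d 1 := by
  intro i hi
  induction i, hi using Nat.le_induction with
  | base => exact fun _ => rfl
  | succ n hn ih => exact fun hnm => (h n hn (by omega)).symm.trans (ih (by omega))

theorem equal_jumps_of_minimizer_general (a b p q lam : ℝ) (hp : 0 < p)
    (hlam : 0 < lam)
    (m : ℕ) (t c : ℕ → ℝ)
    (ht0 : t 0 = a) (htm : t (m + 1) = b)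
    (htmono : ∀ i, i ≤ m → t i < t (i + 1))
    (hjump : ∀ i, 1 ≤ i → i ≤ m → c (i - 1) < c i)
    (hmin : ∀ (n : ℕ) (t' c' : ℕ → ℝ), t' 0 = a → t' (n + 1) = b →
      (∀ i, i ≤ n → t' i < t' (i + 1)) → (∀ i, 1 ≤ i → i ≤ n → c' (i - 1) ≤ c' i) →
      stepEnergyAffine a b lam p q m t c ≤ stepEnergyAffine a b lam p q n t' c') :
    (∀ i j, 1 ≤ i → i < m → 1 ≤ j → j < m → t (i + 1) - t i = t (j + 1) - t j) ∧
      (∀ i j, 1 ≤ i → i ≤ m → 1 ≤ j → j ≤ m → c i - c (i - 1) = c j - c (j - 1)) := by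
  have hmid : ∀ k, 1 ≤ k → k ≤ m → 2 * (p * t k + q) = c (k - 1) + c k := fun k hk hkm =>
    midpoint_of_minimizer hp.ne' hlam.ne' ht0 htm htmono hk hkm (hjump k hk hkm)
      fun t' h0 hm hmono => hmin m t' c h0 hm hmono fun k hk hkm => (hjump k hk hkm).le
  have hjumps := eq_of_forall_eq_succ (d := fun k => c k - c (k - 1)) fun i hi him =>
    jump_eq_jump_succ_of_minimizer hp ht0 htm htmono hjump hmid hi him (hmin m)
  have hgap : ∀ i, 1 ≤ i → i < m → 2 * p * (t (i + 1) - t i) = 2 * (c 1 - c 0) := by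
    intro i hi him
    have h₁ := hmid i hi him.le
    have h₂ := hmid (i + 1) (by omega) him
    have e₁ := hjumps i hi him.le
    have e₂ := hjumps (i + 1) (by omega) him
    simp only [Nat.add_sub_cancel, Nat.sub_self] at h₂ e₁ e₂
    linarith
  refine ⟨fun i j hi him hj hjm => ?_, fun i j hi him hj hjm => ?_⟩
  · exact mul_left_cancel₀ (by positivity) ((hgap i hi him).trans (hgap j hj hjm).symm)
  · exact (hjumps i hi him).trans (hjumps j hj hjm).symm

/-- Theorem 1.7 / 4.9: for increasing affine data `g(x) = px + q` and `K(ρ) = ρ/(1+ρ)`,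
any minimizer `U` of `TV_{Kg}` among non-decreasing piecewise constant functions with
finitely many jumps on `(a,b)`, with jump points `a < a₁ < ⋯ < a_m < b`, has all gaps
`a_{i+1} - a_i` equal and all jump sizes equal. -/
theorem equal_jumps_of_minimizer (a b p q lam : ℝ) (hab : a < b) (hp : 0 < p)
    (hlam : 0 < lam)
    (m : ℕ) (hm : 1 ≤ m) (t c : ℕ → ℝ)
    (ht0 : t 0 = a) (htm : t (m + 1) = b)
    (htmono : ∀ i, i ≤ m → t i < t (i + 1))
    (hjump : ∀ i, 1 ≤ i → i ≤ m → c (i - 1) < c i)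
    (hmin : ∀ (n : ℕ) (t' c' : ℕ → ℝ), t' 0 = a → t' (n + 1) = b →
      (∀ i, i ≤ n → t' i < t' (i + 1)) → (∀ i, 1 ≤ i → i ≤ n → c' (i - 1) ≤ c' i) →
      stepEnergyAffine a b lam p q m t c ≤ stepEnergyAffine a b lam p q n t' c') :
    (∀ i j, 1 ≤ i → i < m → 1 ≤ j → j < m → t (i + 1) - t i = t (j + 1) - t j) ∧
      (∀ i j, 1 ≤ i → i ≤ m → 1 ≤ j → j ≤ m → c i - c (i - 1) = c j - c (j - 1)) :=
  equal_jumps_of_minimizer_general a b p q lam hp hlam m t c ht0 htm htmono hjump hmin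
end
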